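/- arXiv:0710.4245 — 7 statements merged into one kernel-verified Lean document; each statement's English description precedes it below -/
import Mathlib

section
/- Unbiasedness of the Poisson Estimator (conditional on the path): if κ has the Poisson distribution with mean λt for some λ > 0 and c ∈ ℝ is arbitrary, then E[ e^{(λ−c)t} · λ^{−κ} · ∏_{j=1}^{κ} (c − h(ψ_j)) ] = exp( −∫_0^t h(s) ds ). -/
/-!
Conditioning on `κ = k` and using the independence of `κ` from the `ψ_j`, the estimator has
conditional mean `e^{(λ-c)t} λ^{-k} m^k`, where `m = c - t⁻¹ ∫_0^t h` is the common mean of the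
independent factors `c - h(ψ_j)`. Averaging over the Poisson weights gives the exponential series
`e^{(λ-c)t} e^{-λt} Σ_k (t m)^k / k! = e^{(λ-c)t - λt + t m} = e^{-∫_0^t h}`. The same computation
with `|c - h|` in place of `c - h` makes the series absolutely convergent, which justifies summing
the conditional expectations.
-/

open MeasureTheory ProbabilityTheory Real Finset

namespace ProbabilityTheory

variable {Ω : Type*} [MeasurableSpace Ω] {P : Measure Ω}

section ProductOfIndependent

variable {X : ℕ → Ω → ℝ}

lemma iIndepFun.indepFun_fun_prod_range (hX : iIndepFun X P) (hmeas : ∀ j, Measurable (X j))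
    (k : ℕ) : IndepFun (fun ω => ∏ j ∈ range k, X j ω) (X k) P := by
  simpa only [Finset.prod_fn] using hX.indepFun_prod_range_succ hmeas k

lemma iIndepFun.integrable_prod_range (hX : iIndepFun X P) (hmeas : ∀ j, Measurable (X j))
    (hint : ∀ j, Integrable (X j) P) (k : ℕ) :
    Integrable (fun ω => ∏ j ∈ range k, X j ω) P := by
  have := hX.isProbabilityMeasure
  induction k with
  | zero => simp
  | succ k ih =>
    simp_rw [prod_range_succ]
    exact (hX.indepFun_fun_prod_range hmeas k).integrable_mul ih (hint k)

lemma iIndepFun.integral_prod_range_eq_pow (hX : iIndepFun X P) (hmeas : ∀ j, Measurable (X j))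
    {m : ℝ} (hm : ∀ j, ∫ ω, X j ω ∂P = m) (k : ℕ) :
    ∫ ω, ∏ j ∈ range k, X j ω ∂P = m ^ k := by
  have := hX.isProbabilityMeasure
  induction k with
  | zero => simp
  | succ k ih =>
    simp_rw [prod_range_succ, pow_succ, ← ih, ← hm k]
    exact (hX.indepFun_fun_prod_range hmeas k).integral_mul_eq_mul_integral
      (Finset.measurable_prod _ fun j _ => hmeas j).aestronglyMeasurable
      (hmeas k).aestronglyMeasurable

end ProductOfIndependent

section UniformOnIcc

variable {X : Ω → ℝ} {t : ℝ}

lemma integrable_comp_of_map_eq_uniformIcc (hX : Measurable X) (ht : 0 < t)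
    (hlaw : P.map X = (ENNReal.ofReal t)⁻¹ • volume.restrict (Set.Icc 0 t))
    {g : ℝ → ℝ} (hg : IntegrableOn g (Set.Icc 0 t)) :
    Integrable (fun ω => g (X ω)) P := by
  refine Integrable.comp_measurable ?_ hX
  rw [hlaw]
  exact hg.smul_measure (by simpa using ht)

lemma integral_comp_of_map_eq_uniformIcc (hX : Measurable X) (ht : 0 ≤ t)
    (hlaw : P.map X = (ENNReal.ofReal t)⁻¹ • volume.restrict (Set.Icc 0 t))
    {g : ℝ → ℝ} (hg : Measurable g) :
    ∫ ω, g (X ω) ∂P = t⁻¹ * ∫ s in 0..t, g s := by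
  rw [← integral_map hX.aemeasurable hg.aestronglyMeasurable, hlaw, integral_smul_measure,
    intervalIntegral.integral_of_le ht, integral_Icc_eq_integral_Ioc, ENNReal.toReal_inv,
    ENNReal.toReal_ofReal ht, smul_eq_mul]

end UniformOnIcc

section IndependentUniformOnIcc

variable {ψ : ℕ → Ω → ℝ} {t : ℝ}

lemma iIndepFun.integrable_prod_range_comp_of_uniformIcc (hψ : iIndepFun ψ P)
    (hψmeas : ∀ j, Measurable (ψ j)) (ht : 0 < t)
    (hlaw : ∀ j, P.map (ψ j) = (ENNReal.ofReal t)⁻¹ • volume.restrict (Set.Icc 0 t))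
    {φ : ℝ → ℝ} (hφmeas : Measurable φ) (hφ : IntegrableOn φ (Set.Icc 0 t)) (k : ℕ) :
    Integrable (fun ω => ∏ j ∈ range k, φ (ψ j ω)) P :=
  (hψ.comp _ fun _ => hφmeas).integrable_prod_range (fun j => hφmeas.comp (hψmeas j))
    (fun j => integrable_comp_of_map_eq_uniformIcc (hψmeas j) ht (hlaw j) hφ) k

lemma iIndepFun.integral_prod_range_comp_of_uniformIcc (hψ : iIndepFun ψ P)
    (hψmeas : ∀ j, Measurable (ψ j)) (ht : 0 ≤ t)
    (hlaw : ∀ j, P.map (ψ j) = (ENNReal.ofReal t)⁻¹ • volume.restrict (Set.Icc 0 t))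
    {φ : ℝ → ℝ} (hφmeas : Measurable φ) (k : ℕ) :
    ∫ ω, ∏ j ∈ range k, φ (ψ j ω) ∂P = (t⁻¹ * ∫ s in 0..t, φ s) ^ k :=
  (hψ.comp _ fun _ => hφmeas).integral_prod_range_eq_pow (fun j => hφmeas.comp (hψmeas j))
    (fun j => integral_comp_of_map_eq_uniformIcc (hψmeas j) ht (hlaw j) hφmeas) k

end IndependentUniformOnIcc

section ConditioningOnIndependent

variable {β : Type*} [MeasurableSpace β]

lemma IndepFun.setIntegral_preimage_eq_mul {α : Type*} [MeasurableSpace α]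
    {κ : Ω → α} {Y : Ω → β} (hκY : IndepFun κ Y P) (hκ : Measurable κ) (hY : Measurable Y)
    {S : Set α} (hS : MeasurableSet S) {g : β → ℝ} (hg : Measurable g) :
    ∫ ω in κ ⁻¹' S, g (Y ω) ∂P = P.real (κ ⁻¹' S) * ∫ ω, g (Y ω) ∂P :=
  ((IndepFun_iff_Indep κ Y P).1 hκY).setIntegral_eq_mul hκ.comap_le hY.aemeasurable ⟨S, hS, rfl⟩
    hg.aestronglyMeasurable

lemma IndepFun.hasSum_integral_of_nat {κ : Ω → ℕ} {Y : Ω → β} (hκY : IndepFun κ Y P)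
    (hκ : Measurable κ) (hY : Measurable Y) {F : ℕ → β → ℝ} (hF : ∀ k, Measurable (F k))
    (hint : ∀ k, Integrable (fun ω => F k (Y ω)) P)
    (hsum : Summable fun k => P.real (κ ⁻¹' {k}) * ∫ ω, ‖F k (Y ω)‖ ∂P) :
    HasSum (fun k => P.real (κ ⁻¹' {k}) * ∫ ω, F k (Y ω) ∂P) (∫ ω, F (κ ω) (Y ω) ∂P) := by
  have hmeas (k : ℕ) : MeasurableSet (κ ⁻¹' {k}) := hκ (measurableSet_singleton k)
  have hEqOn (k : ℕ) : Set.EqOn (fun ω => F (κ ω) (Y ω)) (fun ω => F k (Y ω)) (κ ⁻¹' {k}) :=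
    fun ω (hω : κ ω = k) => by simp only [hω]
  have hpiece (k : ℕ) : ∫ ω in κ ⁻¹' {k}, F (κ ω) (Y ω) ∂P
      = P.real (κ ⁻¹' {k}) * ∫ ω, F k (Y ω) ∂P := by
    rw [setIntegral_congr_fun (hmeas k) (hEqOn k),
      hκY.setIntegral_preimage_eq_mul hκ hY (measurableSet_singleton k) (hF k)]
  have hpiece_norm (k : ℕ) : ∫ ω in κ ⁻¹' {k}, ‖F (κ ω) (Y ω)‖ ∂P
      = P.real (κ ⁻¹' {k}) * ∫ ω, ‖F k (Y ω)‖ ∂P := by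
    rw [setIntegral_congr_fun (hmeas k) (fun ω hω => congrArg norm (hEqOn k hω)),
      hκY.setIntegral_preimage_eq_mul hκ hY (measurableSet_singleton k) (hF k).norm]
  have hcover : (⋃ k, κ ⁻¹' {k}) = Set.univ := by
    ext ω
    simp
  have hdisj : Pairwise fun i j => Disjoint (κ ⁻¹' {i}) (κ ⁻¹' {j}) :=
    fun i j hij => (Set.disjoint_singleton.2 hij).preimage κ
  have hintOn : IntegrableOn (fun ω => F (κ ω) (Y ω)) (⋃ k, κ ⁻¹' {k}) P :=
    integrableOn_iUnion_of_summable_integral_norm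
      (fun k => (hint k).integrableOn.congr_fun (hEqOn k).symm (hmeas k))
      (by simpa only [hpiece_norm] using hsum)
  simpa only [hpiece, hcover, Measure.restrict_univ]
    using hasSum_integral_iUnion hmeas hdisj hintOn

end ConditioningOnIndependent

end ProbabilityTheory

lemma hasSum_poisson_mul_inv_pow {lam : ℝ} (hlam : lam ≠ 0) (t x : ℝ) :
    HasSum (fun k : ℕ => exp (-(lam * t)) * (lam * t) ^ k / k.factorial * ((lam ^ k)⁻¹ * x ^ k))
      (exp (-(lam * t)) * exp (t * x)) := by
  have hterm (k : ℕ) : exp (-(lam * t)) * (lam * t) ^ k / k.factorial * ((lam ^ k)⁻¹ * x ^ k)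
      = exp (-(lam * t)) * ((t * x) ^ k / k.factorial) := by
    rw [mul_pow, mul_pow]
    field_simp
  simpa only [hterm, ← exp_eq_exp_ℝ]
    using (NormedSpace.expSeries_div_hasSum_exp (t * x)).mul_left (exp (-(lam * t)))

/-- Unbiasedness of the Poisson Estimator (conditional on the path): if `κ` is
Poisson with mean `λ t` and `c` is arbitrary, then
`E[ e^{(λ-c)t} λ^{-κ} ∏_{j=1}^{κ} (c - h(ψ_j)) ] = exp(-∫_0^t h(s) ds)`,
where the `ψ_j` are i.i.d. uniform on `[0,t]`, independent of `κ`. -/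
theorem poisson_estimator_unbiased
    {Ω : Type*} [MeasurableSpace Ω] (P : Measure Ω) [IsProbabilityMeasure P]
    (t : ℝ) (ht : 0 < t)
    (h : ℝ → ℝ) (hmeas : Measurable h)
    (Ch : ℝ) (hbd : ∀ s ∈ Set.Icc (0 : ℝ) t, |h s| ≤ Ch)
    (ψ : ℕ → Ω → ℝ) (hψmeas : ∀ j, Measurable (ψ j))
    (hψlaw : ∀ j, Measure.map (ψ j) P
      = (ENNReal.ofReal t)⁻¹ • volume.restrict (Set.Icc (0 : ℝ) t))
    (hψindep : iIndepFun ψ P)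
    (κ : Ω → ℕ) (hκmeas : Measurable κ)
    (hκψindep : IndepFun κ (fun ω => fun j => ψ j ω) P)
    (lam c : ℝ) (hlam : 0 < lam)
    (hκlaw : ∀ k : ℕ, P {ω | κ ω = k}
      = ENNReal.ofReal (Real.exp (-(lam * t)) * (lam * t) ^ k / Nat.factorial k)) :
    ∫ ω, Real.exp ((lam - c) * t) * (lam ^ κ ω)⁻¹
        * ∏ j ∈ Finset.range (κ ω), (c - h (ψ j ω)) ∂P
      = Real.exp (-∫ s in (0 : ℝ)..t, h s) := by
  have hh : IntegrableOn h (Set.Icc 0 t) :=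
    Measure.integrableOn_of_bounded (by simp) hmeas.aestronglyMeasurable
      ((ae_restrict_iff' measurableSet_Icc).2 (ae_of_all _ hbd))
  have hg : Measurable fun s => c - h s := measurable_const.sub hmeas
  set m := t⁻¹ * ∫ s in 0..t, (c - h s) with hm
  set F : ℕ → (ℕ → ℝ) → ℝ := fun k x => (lam ^ k)⁻¹ * ∏ j ∈ range k, (c - h (x j))
  have hFint (k : ℕ) : Integrable (fun ω => F k (ψ · ω)) P :=
    (hψindep.integrable_prod_range_comp_of_uniformIcc hψmeas ht hψlaw hg
      ((integrableOn_const (by simp)).sub hh) k).const_mul _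
  have hFmean (k : ℕ) : ∫ ω, F k (ψ · ω) ∂P = (lam ^ k)⁻¹ * m ^ k := by
    rw [integral_const_mul, hψindep.integral_prod_range_comp_of_uniformIcc hψmeas ht.le hψlaw hg]
  have hFnorm (k : ℕ) : ∫ ω, ‖F k (ψ · ω)‖ ∂P
      = (lam ^ k)⁻¹ * (t⁻¹ * ∫ s in 0..t, |c - h s|) ^ k := by
    simp only [F, norm_mul, norm_prod, norm_inv, norm_pow, Real.norm_eq_abs, abs_of_pos hlam]
    rw [integral_const_mul,
      hψindep.integral_prod_range_comp_of_uniformIcc hψmeas ht.le hψlaw hg.abs]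
  have hpk (k : ℕ) : P.real (κ ⁻¹' {k}) = exp (-(lam * t)) * (lam * t) ^ k / k.factorial := by
    change (P {ω | κ ω = k}).toReal = _
    rw [hκlaw k, ENNReal.toReal_ofReal (by positivity)]
  have hseries := hasSum_poisson_mul_inv_pow hlam.ne' t
  have hcond : HasSum (fun k => exp (-(lam * t)) * (lam * t) ^ k / k.factorial
      * ((lam ^ k)⁻¹ * m ^ k)) (∫ ω, F (κ ω) (ψ · ω) ∂P) := by
    simpa only [hFmean, hpk] using hκψindep.hasSum_integral_of_nat hκmeas
      (measurable_pi_lambda _ hψmeas) (fun k => by fun_prop) hFint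
      (by simpa only [hFnorm, hpk] using (hseries _).summable)
  have htm : t * m = c * t - ∫ s in 0..t, h s := by
    rw [hm, intervalIntegral.integral_sub intervalIntegrable_const
      ((intervalIntegrable_iff_integrableOn_Icc_of_le ht.le).2 hh), intervalIntegral.integral_const,
      smul_eq_mul, sub_zero]
    field_simp
  calc _ = exp ((lam - c) * t) * ∫ ω, F (κ ω) (ψ · ω) ∂P := by
        simp only [F, mul_assoc]
        exact integral_const_mul _ _
    _ = exp ((lam - c) * t) * (exp (-(lam * t)) * exp (t * m)) := by
        rw [hcond.unique (hseries m)]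
    _ = exp (-∫ s in (0 : ℝ)..t, h s) := by
        rw [← exp_add, ← exp_add, htm]
        ring_nf
end

section
/- Unbiasedness of the Generalised Poisson Estimator (conditional on the path): if U ≥ sup_{s∈[0,t]} h(s), then E[I] = exp( −∫_0^t h(s) ds ). -/
open MeasureTheory ProbabilityTheory Real Finset

/-!
Conditioning on `κ = k`, which is independent of the `ψ j`, gives
`E[I] = ∑ₖ p k · e^{-Ut} tᵏ / (k! p k) · mᵏ` with `m = E[U - h(ψ₀)] = U - t⁻¹ ∫₀ᵗ h`, because the
`ψ j` are i.i.d. This is the exponential series `e^{-Ut} e^{tm} = exp (-∫₀ᵗ h)`. The same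
computation with `|U - h|` in place of `U - h` justifies exchanging expectation and summation.
-/

namespace ProbabilityTheory

variable {Ω ι : Type*} [MeasurableSpace Ω] {P : Measure Ω}

section IdentDistrib

variable {𝓧 : Type*} [MeasurableSpace 𝓧] {ψ : ι → Ω → 𝓧} {μ : Measure 𝓧} {f : 𝓧 → ℝ}

lemma iIndepFun.integrable_finset_prod_comp (hψ : iIndepFun ψ P) (hmeas : ∀ i, Measurable (ψ i))
    (hlaw : ∀ i, P.map (ψ i) = μ) (hf : Measurable f) (hfi : Integrable f μ) (s : Finset ι) :
    Integrable (fun ω ↦ ∏ i ∈ s, f (ψ i ω)) P := by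
  refine ⟨(Finset.measurable_prod s fun i _ ↦ hf.comp (hmeas i)).aestronglyMeasurable, ?_⟩
  calc ∫⁻ ω, ‖∏ i ∈ s, f (ψ i ω)‖ₑ ∂P = ∫⁻ ω, ∏ i ∈ s, ‖f (ψ i ω)‖ₑ ∂P := by
        simp only [enorm_eq_nnnorm, nnnorm_prod, ENNReal.ofNNReal_finsetProd]
    _ = ∏ i ∈ s, ∫⁻ ω, ‖f (ψ i ω)‖ₑ ∂P :=
        lintegral_prod_eq_prod_lintegral_of_indepFun s _
          (hψ.comp (fun _ ↦ fun x ↦ ‖f x‖ₑ) fun _ ↦ hf.enorm) fun i ↦ (hf.comp (hmeas i)).enorm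
    _ < ⊤ := ENNReal.prod_lt_top fun i _ ↦ ((hlaw i ▸ hfi).comp_measurable (hmeas i)).2

lemma iIndepFun.integral_finset_prod_comp_eq_pow (hψ : iIndepFun ψ P)
    (hmeas : ∀ i, Measurable (ψ i)) (hlaw : ∀ i, P.map (ψ i) = μ) (hf : Measurable f)
    (s : Finset ι) :
    ∫ ω, ∏ i ∈ s, f (ψ i ω) ∂P = (∫ x, f x ∂μ) ^ #s := by
  conv_lhs => enter [2, ω]; rw [← Finset.prod_coe_sort s]
  rw [(hψ.precomp Subtype.val_injective).integral_fun_prod_comp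
    (fun i ↦ (hmeas i).aemeasurable) fun _ ↦ hf.aestronglyMeasurable]
  simp [← integral_map (hmeas _).aemeasurable hf.aestronglyMeasurable, hlaw]

end IdentDistrib

lemma integral_comp_eq_tsum_of_indepFun {𝓨 : Type*} [Countable ι] [MeasurableSpace ι]
    [MeasurableSingletonClass ι] [MeasurableSpace 𝓨] {κ : Ω → ι} {Y : Ω → 𝓨}
    (hκ : Measurable κ) (hY : Measurable Y) (hκY : IndepFun κ Y P) {F : ι → 𝓨 → ℝ}
    (hF : ∀ k, Measurable (F k)) (hFi : ∀ k, Integrable (fun ω ↦ F k (Y ω)) P)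
    (hsum : Summable fun k ↦ P.real (κ ⁻¹' {k}) * ∫ ω, |F k (Y ω)| ∂P) :
    ∫ ω, F (κ ω) (Y ω) ∂P = ∑' k, P.real (κ ⁻¹' {k}) * ∫ ω, F k (Y ω) ∂P := by
  have hfib : ∀ k, MeasurableSet (κ ⁻¹' {k}) := fun k ↦ hκ (measurableSet_singleton k)
  have hP : Measure.sum (fun k ↦ P.restrict (κ ⁻¹' {k})) = P := by
    rw [← Measure.restrict_iUnion (pairwise_disjoint_fiber κ) hfib, ← Set.preimage_iUnion,
      Set.iUnion_of_singleton, Set.preimage_univ, Measure.restrict_univ]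
  have hfiber : ∀ G : 𝓨 → ℝ, Measurable G → ∀ k,
      ∫ ω in κ ⁻¹' {k}, G (Y ω) ∂P = P.real (κ ⁻¹' {k}) * ∫ ω, G (Y ω) ∂P :=
    fun G hG k ↦ Indep.setIntegral_eq_mul hκ.comap_le hκY hY.aemeasurable
      ⟨{k}, measurableSet_singleton k, rfl⟩ hG.aestronglyMeasurable
  have hon : ∀ k, Set.EqOn (fun ω ↦ F (κ ω) (Y ω)) (fun ω ↦ F k (Y ω)) (κ ⁻¹' {k}) :=
    fun k ω hω ↦ congrArg (F · (Y ω)) hω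
  have hint : Integrable (fun ω ↦ F (κ ω) (Y ω)) (Measure.sum fun k ↦ P.restrict (κ ⁻¹' {k})) := by
    refine integrable_sum_measure (fun k ↦ (hFi k).integrableOn.congr_fun (hon k).symm (hfib k)) ?_
    refine hsum.congr fun k ↦ ?_
    rw [setIntegral_congr_fun (hfib k) fun ω hω ↦ congrArg norm (hon k hω)]
    exact (hfiber (fun y ↦ |F k y|) (hF k).abs k).symm
  nth_rw 1 [← hP]
  rw [integral_sum_measure hint]
  refine tsum_congr fun k ↦ ?_
  rw [setIntegral_congr_fun (hfib k) (hon k)]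
  exact hfiber (F k) (hF k) k

end ProbabilityTheory

lemma hasSum_mul_mul_pow_div_factorial_mul {p : ℕ → ℝ} (hp : ∀ k, p k ≠ 0) (C t x : ℝ) :
    HasSum (fun k ↦ p k * (C * t ^ k / (k.factorial * p k) * x ^ k)) (C * exp (t * x)) := by
  have hterm : (fun k ↦ p k * (C * t ^ k / (k.factorial * p k) * x ^ k))
      = fun k ↦ C * ((t * x) ^ k / k.factorial) := by
    funext k
    field_simp [hp k]
    ring
  rw [hterm, exp_eq_exp_ℝ]
  exact (NormedSpace.expSeries_div_hasSum_exp (t * x)).mul_left C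

lemma mul_integral_const_sub_smul_restrict_Icc {t : ℝ} (ht : 0 < t) {h : ℝ → ℝ}
    (hh : IntegrableOn h (Set.Icc 0 t)) (U : ℝ) :
    t * ∫ x, U - h x ∂((ENNReal.ofReal t)⁻¹ • volume.restrict (Set.Icc 0 t))
      = U * t - ∫ x in 0..t, h x := by
  rw [integral_smul_measure, ENNReal.toReal_inv, ENNReal.toReal_ofReal ht.le, smul_eq_mul,
    integral_Icc_eq_integral_Ioc, ← intervalIntegral.integral_of_le ht.le,
    intervalIntegral.integral_sub intervalIntegrable_const
      ((intervalIntegrable_iff_integrableOn_Icc_of_le ht.le).2 hh)]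
  field_simp
  simp

theorem generalised_poisson_estimator_unbiased_general
    {Ω : Type*} [MeasurableSpace Ω] (P : Measure Ω)
    (t : ℝ) (ht : 0 < t)
    (h : ℝ → ℝ) (hmeas : Measurable h)
    (Ch : ℝ) (hbd : ∀ s ∈ Set.Icc (0 : ℝ) t, |h s| ≤ Ch)
    (ψ : ℕ → Ω → ℝ) (hψmeas : ∀ j, Measurable (ψ j))
    (hψlaw : ∀ j, Measure.map (ψ j) P
      = (ENNReal.ofReal t)⁻¹ • volume.restrict (Set.Icc (0 : ℝ) t))
    (hψindep : iIndepFun ψ P)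
    (κ : Ω → ℕ) (hκmeas : Measurable κ)
    (hκψindep : IndepFun κ (fun ω => fun j => ψ j ω) P)
    (p : ℕ → ℝ) (hp : ∀ k, 0 < p k)
    (hκlaw : ∀ k : ℕ, P {ω | κ ω = k} = ENNReal.ofReal (p k))
    (U : ℝ) :
    ∫ ω, Real.exp (-(U * t)) * t ^ κ ω / (Nat.factorial (κ ω) * p (κ ω))
        * ∏ j ∈ Finset.range (κ ω), (U - h (ψ j ω)) ∂P
      = Real.exp (-∫ s in (0 : ℝ)..t, h s) := by
  set ν : Measure ℝ := (ENNReal.ofReal t)⁻¹ • volume.restrict (Set.Icc 0 t)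
  set c : ℕ → ℝ := fun k ↦ Real.exp (-(U * t)) * t ^ k / (k.factorial * p k)
  have hb : Measurable fun x ↦ U - h x := measurable_const.sub hmeas
  have hh : IntegrableOn h (Set.Icc 0 t) :=
    Measure.integrableOn_of_bounded (by simp) hmeas.aestronglyMeasurable
      ((ae_restrict_iff' measurableSet_Icc).2 (ae_of_all _ hbd))
  have hbν : Integrable (fun x ↦ U - h x) ν :=
    ((integrable_const U).sub hh).smul_measure (ENNReal.inv_ne_top.2 (by simpa using ht))
  have hκ : ∀ k, P.real (κ ⁻¹' {k}) = p k := fun k ↦ by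
    rw [measureReal_def, ← ENNReal.toReal_ofReal (hp k).le, ← hκlaw]
    rfl
  have hmoment : ∀ f : ℝ → ℝ, Measurable f → ∀ k,
      ∫ ω, ∏ j ∈ range k, f (ψ j ω) ∂P = (∫ x, f x ∂ν) ^ k := fun f hf k ↦ by
    simpa using hψindep.integral_finset_prod_comp_eq_pow hψmeas hψlaw hf (range k)
  refine (integral_comp_eq_tsum_of_indepFun (F := fun k v ↦ c k * ∏ j ∈ range k, (U - h (v j)))
    hκmeas (measurable_pi_lambda _ hψmeas) hκψindep (fun k ↦ by fun_prop)
    (fun k ↦ (hψindep.integrable_finset_prod_comp hψmeas hψlaw hb hbν _).const_mul (c k))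
    ?_).trans ?_
  · have hc : ∀ k, 0 < c k := fun k ↦ div_pos (by positivity) (mul_pos (by positivity) (hp k))
    refine (hasSum_mul_mul_pow_div_factorial_mul (fun k ↦ (hp k).ne')
      (Real.exp (-(U * t))) t (∫ x, |U - h x| ∂ν)).summable.congr fun k ↦ ?_
    simp only [hκ, abs_mul, abs_prod, abs_of_pos (hc k), integral_const_mul, hmoment _ hb.abs]
    rfl
  · simp only [hκ, integral_const_mul, hmoment _ hb]
    rw [(hasSum_mul_mul_pow_div_factorial_mul (fun k ↦ (hp k).ne') _ t _).tsum_eq, ← exp_add,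
      mul_integral_const_sub_smul_restrict_Icc ht hh]
    ring_nf

/-- Unbiasedness of the Generalised Poisson Estimator (conditional on the path):
if `U ≥ sup_{s ∈ [0,t]} h(s)`, then
`E[ e^{-Ut} (t^κ / (κ! p(κ))) ∏_{j=1}^{κ} (U - h(ψ_j)) ] = exp(-∫_0^t h(s) ds)`,
where the `ψ_j` are i.i.d. uniform on `[0,t]`, independent of `κ`, and `κ` has
probability mass function `p` with `p(k) > 0` for all `k`. -/
theorem generalised_poisson_estimator_unbiased
    {Ω : Type*} [MeasurableSpace Ω] (P : Measure Ω) [IsProbabilityMeasure P]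
    (t : ℝ) (ht : 0 < t)
    (h : ℝ → ℝ) (hmeas : Measurable h)
    (Ch : ℝ) (hbd : ∀ s ∈ Set.Icc (0 : ℝ) t, |h s| ≤ Ch)
    (ψ : ℕ → Ω → ℝ) (hψmeas : ∀ j, Measurable (ψ j))
    (hψlaw : ∀ j, Measure.map (ψ j) P
      = (ENNReal.ofReal t)⁻¹ • volume.restrict (Set.Icc (0 : ℝ) t))
    (hψindep : iIndepFun ψ P)
    (κ : Ω → ℕ) (hκmeas : Measurable κ)
    (hκψindep : IndepFun κ (fun ω => fun j => ψ j ω) P)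
    (p : ℕ → ℝ) (hp : ∀ k, 0 < p k)
    (hκlaw : ∀ k : ℕ, P {ω | κ ω = k} = ENNReal.ofReal (p k))
    (U : ℝ) (hU : ∀ s ∈ Set.Icc (0 : ℝ) t, h s ≤ U) :
    ∫ ω, Real.exp (-(U * t)) * t ^ κ ω / (Nat.factorial (κ ω) * p (κ ω))
        * ∏ j ∈ Finset.range (κ ω), (U - h (ψ j ω)) ∂P
      = Real.exp (-∫ s in (0 : ℝ)..t, h s) :=
  generalised_poisson_estimator_unbiased_general P t ht h hmeas Ch hbd ψ hψmeas hψlaw hψindep κ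
    hκmeas hκψindep p hp hκlaw U
end

section
/- Second moment formula for the Generalised Poisson Estimator (first part of Theorem 1, conditional on the path): if U ≥ sup_{s∈[0,t]} h(s), then E[I²] = e^{−2Ut} · ∑_{k=0}^{∞} ( t^k / (p(k) · (k!)²) ) · b^k, where b = ∫_0^t (U − h(s))² ds (both sides possibly being +∞). -/
open MeasureTheory ProbabilityTheory Real Finset

open scoped ENNReal

/-! Conditioning on `κ`, which is independent of the `ψ_j`, splits `E[I²]` into
`∑ₖ P(κ = k) E[I² | κ = k]`, and on `{κ = k}` the square `I²` is a constant times a product of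
`k` i.i.d. factors `(U - h(ψ_j))²`, each of mean `b / t`. Everything is nonnegative, so the
computation runs in `ℝ≥0∞` by Tonelli and needs no integrability of `I²`. -/

theorem lintegral_comp_eq_tsum_of_indepFun {Ω β : Type*} [MeasurableSpace Ω]
    [MeasurableSpace β] {P : Measure Ω} [IsFiniteMeasure P] {κ : Ω → ℕ} {Y : Ω → β}
    (hκ : Measurable κ) (hY : Measurable Y) (hκY : IndepFun κ Y P)
    {F : ℕ → β → ℝ≥0∞} (hF : ∀ k, Measurable (F k)) :
    ∫⁻ ω, F (κ ω) (Y ω) ∂P = ∑' k, P {ω | κ ω = k} * ∫⁻ ω, F k (Y ω) ∂P := by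
  have hFκY : Measurable (Function.uncurry F) := measurable_from_prod_countable_right hF
  calc ∫⁻ ω, F (κ ω) (Y ω) ∂P
      = ∫⁻ z, Function.uncurry F z ∂(P.map κ).prod (P.map Y) := by
        rw [← (indepFun_iff_map_prod_eq_prod_map_map hκ.aemeasurable hY.aemeasurable).1 hκY,
          lintegral_map hFκY (hκ.prodMk hY)]
        rfl
    _ = ∑' k, (∫⁻ y, F k y ∂P.map Y) * P.map κ {k} := by
        rw [lintegral_prod _ hFκY.aemeasurable, lintegral_countable']
        rfl
    _ = ∑' k, P {ω | κ ω = k} * ∫⁻ ω, F k (Y ω) ∂P := by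
        refine tsum_congr fun k => ?_
        rw [lintegral_map (hF k) hY, Measure.map_apply hκ (measurableSet_singleton k), mul_comm]
        rfl

theorem lintegral_prod_range_comp_of_iIndepFun {Ω β : Type*} [MeasurableSpace Ω]
    [MeasurableSpace β] {P : Measure Ω} {ψ : ℕ → Ω → β} (hψ : ∀ j, Measurable (ψ j))
    (hind : iIndepFun ψ P) {μ : Measure β} (hlaw : ∀ j, P.map (ψ j) = μ)
    {g : β → ℝ≥0∞} (hg : Measurable g) (k : ℕ) :
    ∫⁻ ω, ∏ j ∈ range k, g (ψ j ω) ∂P = (∫⁻ x, g x ∂μ) ^ k := by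
  rw [lintegral_prod_eq_prod_lintegral_of_indepFun (range k) (fun j ω => g (ψ j ω))
    (hind.comp _ fun _ => hg) fun j => hg.comp (hψ j)]
  simp only [← lintegral_map hg (hψ _), hlaw, prod_const, card_range]

theorem lintegral_Icc_ofReal_eq_intervalIntegral {f : ℝ → ℝ} {a b : ℝ} (hab : a ≤ b)
    (hf : IntegrableOn f (Set.Icc a b)) (hf0 : ∀ x ∈ Set.Icc a b, 0 ≤ f x) :
    ∫⁻ x in Set.Icc a b, ENNReal.ofReal (f x) = ENNReal.ofReal (∫ x in a..b, f x) := by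
  rw [intervalIntegral.integral_of_le hab, integral_Icc_eq_integral_Ioc.symm,
    ofReal_integral_eq_lintegral_ofReal hf ((ae_restrict_iff' measurableSet_Icc).2
      (ae_of_all _ hf0))]

theorem integrableOn_sq_sub_of_abs_le {α : Type*} [MeasurableSpace α] {μ : Measure α}
    {f : α → ℝ} (hf : Measurable f) {s : Set α} (hsm : MeasurableSet s) (hs : μ s ≠ ∞) {C : ℝ}
    (hC : ∀ x ∈ s, |f x| ≤ C) (U : ℝ) :
    IntegrableOn (fun x => (U - f x) ^ 2) s μ := by
  refine Measure.integrableOn_of_bounded (M := (|U| + C) ^ 2) hs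
    ((measurable_const.sub hf).pow_const 2).aestronglyMeasurable ?_
  filter_upwards [ae_restrict_mem hsm] with x hx
  rw [norm_pow, Real.norm_eq_abs]
  exact pow_le_pow_left₀ (abs_nonneg _) ((abs_sub _ _).trans (by linarith [hC x hx])) 2

theorem ENNReal.ofReal_sq_mul_prod {ι : Type*} (c : ℝ) (s : Finset ι) (f : ι → ℝ) :
    ENNReal.ofReal ((c * ∏ i ∈ s, f i) ^ 2)
      = ENNReal.ofReal (c ^ 2) * ∏ i ∈ s, ENNReal.ofReal (f i ^ 2) := by
  rw [mul_pow, ← prod_pow, ENNReal.ofReal_mul (sq_nonneg _),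
    ENNReal.ofReal_prod_of_nonneg fun i _ => sq_nonneg _]

theorem generalised_poisson_estimator_second_moment_general
    {Ω : Type*} [MeasurableSpace Ω] (P : Measure Ω) [IsProbabilityMeasure P]
    (t : ℝ) (ht : 0 < t)
    (h : ℝ → ℝ) (hmeas : Measurable h)
    (Ch : ℝ) (hbd : ∀ s ∈ Set.Icc (0 : ℝ) t, |h s| ≤ Ch)
    (ψ : ℕ → Ω → ℝ) (hψmeas : ∀ j, Measurable (ψ j))
    (hψlaw : ∀ j, Measure.map (ψ j) P
      = (ENNReal.ofReal t)⁻¹ • volume.restrict (Set.Icc (0 : ℝ) t))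
    (hψindep : iIndepFun ψ P)
    (κ : Ω → ℕ) (hκmeas : Measurable κ)
    (hκψindep : IndepFun κ (fun ω => fun j => ψ j ω) P)
    (p : ℕ → ℝ) (hp : ∀ k, 0 < p k)
    (hκlaw : ∀ k : ℕ, P {ω | κ ω = k} = ENNReal.ofReal (p k))
    (U : ℝ)
    (b : ℝ) (hb : b = ∫ s in (0 : ℝ)..t, (U - h s) ^ 2) :
    ∫⁻ ω, ENNReal.ofReal ((Real.exp (-(U * t)) * t ^ κ ω / (Nat.factorial (κ ω) * p (κ ω))
        * ∏ j ∈ Finset.range (κ ω), (U - h (ψ j ω))) ^ 2) ∂P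
      = ∑' k : ℕ, ENNReal.ofReal (Real.exp (-(2 * U * t))
          * (t ^ k / (p k * (Nat.factorial k) ^ 2)) * b ^ k) := by
  have hb0 : 0 ≤ b := hb ▸ intervalIntegral.integral_nonneg ht.le fun s _ => sq_nonneg _
  have hg : Measurable fun x => ENNReal.ofReal ((U - h x) ^ 2) := by fun_prop
  have hfactor : ∫⁻ x, ENNReal.ofReal ((U - h x) ^ 2)
      ∂((ENNReal.ofReal t)⁻¹ • volume.restrict (Set.Icc (0 : ℝ) t)) = ENNReal.ofReal (b / t) := by
    rw [lintegral_smul_measure, lintegral_Icc_ofReal_eq_intervalIntegral ht.le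
      (integrableOn_sq_sub_of_abs_le hmeas measurableSet_Icc (by simp) hbd U)
      fun _ _ => sq_nonneg _, ← hb, smul_eq_mul, ENNReal.ofReal_div_of_pos ht, div_eq_mul_inv,
      mul_comm]
  rw [lintegral_comp_eq_tsum_of_indepFun (F := fun k y => ENNReal.ofReal
    ((Real.exp (-(U * t)) * t ^ k / (k.factorial * p k) * ∏ j ∈ range k, (U - h (y j))) ^ 2))
    hκmeas (measurable_pi_lambda _ hψmeas) hκψindep fun k => by fun_prop]
  refine tsum_congr fun k => ?_
  simp only [ENNReal.ofReal_sq_mul_prod]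
  rw [lintegral_const_mul _ (by fun_prop),
    lintegral_prod_range_comp_of_iIndepFun hψmeas hψindep hψlaw hg, hfactor, hκlaw,
    ← ENNReal.ofReal_pow (div_nonneg hb0 ht.le), ← ENNReal.ofReal_mul (sq_nonneg _),
    ← ENNReal.ofReal_mul (hp k).le]
  congr 1
  have hexp : Real.exp (-(U * t)) ^ 2 = Real.exp (-(2 * U * t)) := by
    rw [← Real.exp_nat_mul]; ring_nf
  have hpk := (hp k).ne'
  rw [div_pow, mul_pow, hexp, div_pow]
  field_simp

/-- Second moment formula for the Generalised Poisson Estimator (first part of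
Theorem 1, conditional on the path): if `U ≥ sup_{s ∈ [0,t]} h(s)`, then
`E[I²] = e^{-2Ut} ∑_{k=0}^∞ (t^k / (p(k) (k!)²)) bᵏ`, where
`b = ∫_0^t (U - h(s))² ds` (both sides possibly being `+∞`). Here
`I = e^{-Ut} (t^κ / (κ! p(κ))) ∏_{j=1}^{κ} (U - h(ψ_j))`, the `ψ_j` are i.i.d.
uniform on `[0,t]`, independent of `κ`, and `κ` has probability mass function
`p` with `p(k) > 0` for all `k`. -/
theorem generalised_poisson_estimator_second_moment
    {Ω : Type*} [MeasurableSpace Ω] (P : Measure Ω) [IsProbabilityMeasure P]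
    (t : ℝ) (ht : 0 < t)
    (h : ℝ → ℝ) (hmeas : Measurable h)
    (Ch : ℝ) (hbd : ∀ s ∈ Set.Icc (0 : ℝ) t, |h s| ≤ Ch)
    (ψ : ℕ → Ω → ℝ) (hψmeas : ∀ j, Measurable (ψ j))
    (hψlaw : ∀ j, Measure.map (ψ j) P
      = (ENNReal.ofReal t)⁻¹ • volume.restrict (Set.Icc (0 : ℝ) t))
    (hψindep : iIndepFun ψ P)
    (κ : Ω → ℕ) (hκmeas : Measurable κ)
    (hκψindep : IndepFun κ (fun ω => fun j => ψ j ω) P)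
    (p : ℕ → ℝ) (hp : ∀ k, 0 < p k)
    (hκlaw : ∀ k : ℕ, P {ω | κ ω = k} = ENNReal.ofReal (p k))
    (U : ℝ) (hU : ∀ s ∈ Set.Icc (0 : ℝ) t, h s ≤ U)
    (b : ℝ) (hb : b = ∫ s in (0 : ℝ)..t, (U - h s) ^ 2) :
    ∫⁻ ω, ENNReal.ofReal ((Real.exp (-(U * t)) * t ^ κ ω / (Nat.factorial (κ ω) * p (κ ω))
        * ∏ j ∈ Finset.range (κ ω), (U - h (ψ j ω))) ^ 2) ∂P
      = ∑' k : ℕ, ENNReal.ofReal (Real.exp (-(2 * U * t))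
          * (t ^ k / (p k * (Nat.factorial k) ^ 2)) * b ^ k) :=
  generalised_poisson_estimator_second_moment_general P t ht h hmeas Ch hbd ψ hψmeas hψlaw hψindep κ
    hκmeas hκψindep p hp hκlaw U b hb
end

section
/- Optimal proposal for the Generalised Poisson Estimator (Theorem 1, conditional on the path): assume U ≥ sup_{s∈[0,t]} h(s) and b = ∫_0^t (U − h(s))² ds > 0. Among all probability mass functions p on ℕ with p(k) > 0 for all k, the second moment E[I²] = e^{−2Ut} ∑_{k≥0} t^k b^k / (p(k) (k!)²) is minimised by the choice p*(k) = e^{−√(tb)} (tb)^{k/2} / k! (the Poisson distribution with mean √(tb)), and the minimal second moment equals e^{−2Ut} · e^{2√(tb)} = ( e^{−Ut} ∑_{k=0}^{∞} (t^{k/2}/k!) b^{k/2} )². -/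
open Real

/-!
With `c = √(t b)` and `a k = e^{-Ut} c^k / k!`, the `k`-th term of the second moment is
`a k ^ 2 / p k`. For a probability vector `p`, the Cauchy–Schwarz (Sedrakyan) inequality gives
`∑ a k ^ 2 / p k ≥ (∑ a k)^2 = e^{-2Ut} e^{2c}`, with equality when `p` is proportional
to `a`, i.e. for the Poisson distribution with mean `c`.
-/

theorem Real.hasSum_pow_div_factorial (x : ℝ) :
    HasSum (fun n : ℕ => x ^ n / (Nat.factorial n : ℝ)) (exp x) :=
  exp_eq_exp_ℝ ▸ NormedSpace.expSeries_div_hasSum_exp x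

theorem sq_tsum_le_tsum_sq_div {ι : Type*} {a p : ι → ℝ} (ha : Summable a)
    (hp : ∀ i, 0 < p i) (hp1 : ∑' i, p i = 1) :
    ENNReal.ofReal ((∑' i, a i) ^ 2) ≤ ∑' i, ENNReal.ofReal (a i ^ 2 / p i) := by
  set S := ∑' i, a i
  have hps : Summable p := by
    by_contra hns
    simp [tsum_eq_zero_of_not_summable hns] at hp1
  by_cases htop : ∑' i, ENNReal.ofReal (a i ^ 2 / p i) = ⊤
  · simp [htop]
  have hnonneg : ∀ i, 0 ≤ a i ^ 2 / p i := fun i => div_nonneg (sq_nonneg _) (hp i).le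
  have hsum : Summable fun i => a i ^ 2 / p i :=
    (ENNReal.summable_toReal htop).congr fun i => ENNReal.toReal_ofReal (hnonneg i)
  -- tangent-line bound: `a²/p - 2 S a + S² p = (a - S p)² / p ≥ 0`
  have tangent : ∀ i, 2 * S * a i - S ^ 2 * p i ≤ a i ^ 2 / p i := fun i => by
    rw [le_div_iff₀ (hp i)]
    nlinarith [sq_nonneg (a i - S * p i)]
  rw [← ENNReal.ofReal_tsum_of_nonneg hnonneg hsum]
  refine ENNReal.ofReal_le_ofReal ?_
  calc S ^ 2 = ∑' i, (2 * S * a i - S ^ 2 * p i) := by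
        rw [(ha.mul_left _).tsum_sub (hps.mul_left _), tsum_mul_left, tsum_mul_left, hp1]
        ring
    _ ≤ ∑' i, a i ^ 2 / p i :=
        ((ha.mul_left _).sub (hps.mul_left _)).tsum_le_tsum tangent hsum

theorem tsum_sq_div_div_tsum {ι : Type*} (a : ι → ℝ) :
    ∑' i, a i ^ 2 / (a i / ∑' j, a j) = (∑' j, a j) ^ 2 := by
  have hterm : ∀ i, a i ^ 2 / (a i / ∑' j, a j) = a i * ∑' j, a j := fun i => by
    rcases eq_or_ne (a i) 0 with h | h
    · simp [h]
    · rw [div_div_eq_mul_div, sq, mul_assoc, mul_div_assoc, mul_div_cancel_left₀ _ h]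
  simp_rw [hterm, tsum_mul_right, sq]

theorem generalised_poisson_estimator_optimal_proposal_general
    (t : ℝ) (ht : 0 < t)
    (U : ℝ)
    (b : ℝ) (hb0 : 0 < b) :
    (∀ p : ℕ → ℝ, (∀ k, 0 < p k) → (∑' k, p k) = 1 →
        ENNReal.ofReal (Real.exp (-(2 * U * t)) * Real.exp (2 * Real.sqrt (t * b)))
          ≤ ∑' k : ℕ, ENNReal.ofReal (Real.exp (-(2 * U * t))
              * (t ^ k * b ^ k / (p k * (Nat.factorial k) ^ 2))))
      ∧ (∑' k : ℕ, Real.exp (-(2 * U * t))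
            * (t ^ k * b ^ k
              / ((Real.exp (-Real.sqrt (t * b)) * Real.sqrt (t * b) ^ k / Nat.factorial k)
                  * (Nat.factorial k) ^ 2)))
          = Real.exp (-(2 * U * t)) * Real.exp (2 * Real.sqrt (t * b))
      ∧ Real.exp (-(2 * U * t)) * Real.exp (2 * Real.sqrt (t * b))
          = (Real.exp (-(U * t))
              * ∑' k : ℕ, Real.sqrt t ^ k * Real.sqrt b ^ k / Nat.factorial k) ^ 2 := by
  set c := √(t * b)
  have hc2 : c ^ 2 = t * b := sq_sqrt (mul_pos ht hb0).le
  set a : ℕ → ℝ := fun k => exp (-(U * t)) * (c ^ k / Nat.factorial k)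
  have ha : HasSum a (exp (-(U * t)) * exp c) := (hasSum_pow_div_factorial c).mul_left _
  have hmoment : exp (-(2 * U * t)) * exp (2 * c) = (∑' k, a k) ^ 2 := by
    rw [ha.tsum_eq, mul_pow, ← exp_nat_mul, ← exp_nat_mul]
    ring_nf
  have hterm : ∀ k (q : ℝ), exp (-(2 * U * t)) * (t ^ k * b ^ k / (q * (Nat.factorial k) ^ 2))
      = a k ^ 2 / q := fun k q => by
    have hexp : exp (-(2 * U * t)) = exp (-(U * t)) ^ 2 := by
      rw [← exp_nat_mul]
      ring_nf
    rw [← mul_pow, ← hc2, hexp]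
    ring
  refine ⟨fun p hp hp1 => ?_, ?_, ?_⟩
  · simpa only [hmoment, hterm] using sq_tsum_le_tsum_sq_div ha.summable hp hp1
  · have hpoisson : ∀ k, exp (-c) * c ^ k / Nat.factorial k = a k / ∑' j, a j := fun k => by
      rw [ha.tsum_eq, exp_neg]
      simp only [a]
      field_simp
    simp only [hterm, hpoisson, tsum_sq_div_div_tsum, hmoment]
  · have hsqrt : ∀ k : ℕ, √t ^ k * √b ^ k = c ^ k := fun k => by
      rw [← mul_pow, ← sqrt_mul ht.le]
    simp only [hsqrt, (hasSum_pow_div_factorial c).tsum_eq, hmoment, ha.tsum_eq]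

/-- Optimal proposal for the Generalised Poisson Estimator (Theorem 1,
conditional on the path): assume `U ≥ sup_{s ∈ [0,t]} h(s)` and
`b = ∫_0^t (U - h(s))² ds > 0`. Among all strictly positive probability mass
functions `p` on `ℕ`, the second moment
`E[I²] = e^{-2Ut} ∑_k t^k b^k / (p(k) (k!)²)` is minimised by the choice
`p*(k) = e^{-√(tb)} (tb)^{k/2} / k!` (the Poisson distribution with mean
`√(tb)`), and the minimal second moment equals
`e^{-2Ut} e^{2√(tb)} = ( e^{-Ut} ∑_k (t^{k/2}/k!) b^{k/2} )²`. -/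
theorem generalised_poisson_estimator_optimal_proposal
    (t : ℝ) (ht : 0 < t)
    (h : ℝ → ℝ) (hmeas : Measurable h)
    (Ch : ℝ) (hbd : ∀ s ∈ Set.Icc (0 : ℝ) t, |h s| ≤ Ch)
    (U : ℝ) (hU : ∀ s ∈ Set.Icc (0 : ℝ) t, h s ≤ U)
    (b : ℝ) (hb : b = ∫ s in (0 : ℝ)..t, (U - h s) ^ 2) (hb0 : 0 < b) :
    (∀ p : ℕ → ℝ, (∀ k, 0 < p k) → (∑' k, p k) = 1 →
        ENNReal.ofReal (Real.exp (-(2 * U * t)) * Real.exp (2 * Real.sqrt (t * b)))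
          ≤ ∑' k : ℕ, ENNReal.ofReal (Real.exp (-(2 * U * t))
              * (t ^ k * b ^ k / (p k * (Nat.factorial k) ^ 2))))
      ∧ (∑' k : ℕ, Real.exp (-(2 * U * t))
            * (t ^ k * b ^ k
              / ((Real.exp (-Real.sqrt (t * b)) * Real.sqrt (t * b) ^ k / Nat.factorial k)
                  * (Nat.factorial k) ^ 2)))
          = Real.exp (-(2 * U * t)) * Real.exp (2 * Real.sqrt (t * b))
      ∧ Real.exp (-(2 * U * t)) * Real.exp (2 * Real.sqrt (t * b))
          = (Real.exp (-(U * t))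
              * ∑' k : ℕ, Real.sqrt t ^ k * Real.sqrt b ^ k / Nat.factorial k) ^ 2 :=
  generalised_poisson_estimator_optimal_proposal_general t ht U b hb0
end

section
/- Second moment of the GPE with a Poisson proposal: assume U ≥ sup_{s∈[0,t]} h(s), and let p be the Poisson probability mass function with mean μt for some μ > 0, i.e. p(k) = e^{−μt}(μt)^k/k!. Then E[I²] = exp( −2Ut + μt + b/μ ), where b = ∫_0^t (U − h(s))² ds. Moreover, if b > 0, the map μ ↦ exp(−2Ut + μt + b/μ) on (0,∞) attains its minimum exp(−2Ut + 2√(tb)) at μ = √(b/t). -/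
/-!
Conditioning on `κ = k`, which is independent of the `ψ_j`, gives
`E[I²] = ∑ₖ p(k) wₖ² mᵏ` with `wₖ = e^{-Ut} tᵏ / (k! p(k))` and
`m = E[(U - h(ψ₁))²] = b / t`, the `ψ_j` being i.i.d. uniform on `[0, t]`.
For the Poisson proposal the `k`-th term is `e^{-2Ut + μt} (b/μ)ᵏ / k!`, so the series sums
to `e^{-2Ut + μt + b/μ}`. The optimisation in `μ` is AM-GM: `μt + b/μ ≥ 2√(tb)`, with equality
at `μ = √(b/t)`.
-/

open scoped ENNReal Nat

open MeasureTheory ProbabilityTheory Real Finset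

section

variable {Ω β : Type*} [MeasurableSpace Ω] [MeasurableSpace β] {P : Measure Ω}

theorem lintegral_comp_nat_eq_tsum_of_indepFun {κ : Ω → ℕ} {X : Ω → β} (hκ : Measurable κ)
    (hX : Measurable X) (hκX : IndepFun κ X P) {Φ : ℕ → β → ℝ≥0∞} (hΦ : ∀ k, Measurable (Φ k)) :
    ∫⁻ ω, Φ (κ ω) (X ω) ∂P = ∑' k, P (κ ⁻¹' {k}) * ∫⁻ ω, Φ k (X ω) ∂P := by
  have hsplit : ∀ ω, Φ (κ ω) (X ω) = ∑' k, ({k} : Set ℕ).indicator 1 (κ ω) * Φ k (X ω) := by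
    intro ω
    rw [tsum_eq_single (κ ω) fun k hk => by simp [Ne.symm hk]]
    simp
  simp_rw [hsplit]
  rw [lintegral_tsum fun k => (by fun_prop : Measurable fun ω =>
    ({k} : Set ℕ).indicator 1 (κ ω) * Φ k (X ω)).aemeasurable]
  refine tsum_congr fun k => ?_
  rw [lintegral_mul_eq_lintegral_mul_lintegral_of_indepFun''
    (f := fun ω => ({k} : Set ℕ).indicator 1 (κ ω)) (g := fun ω => Φ k (X ω))
    (by fun_prop) (by fun_prop)
    (hκX.comp (measurable_from_nat (f := ({k} : Set ℕ).indicator 1)) (hΦ k)),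
    ← lintegral_map measurable_from_nat hκ, lintegral_indicator_one (measurableSet_singleton k),
    Measure.map_apply hκ (measurableSet_singleton k)]

theorem lintegral_ofReal_sq_const_mul_prod_of_iIndepFun {ψ : ℕ → Ω → ℝ}
    (hψ : ∀ j, Measurable (ψ j)) (hind : iIndepFun ψ P) {g : ℝ → ℝ} (hg : Measurable g)
    {m : ℝ≥0∞} (hm : ∀ j, ∫⁻ ω, ENNReal.ofReal (g (ψ j ω) ^ 2) ∂P = m) (c : ℝ) (k : ℕ) :
    ∫⁻ ω, ENNReal.ofReal ((c * ∏ j ∈ range k, g (ψ j ω)) ^ 2) ∂P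
      = ENNReal.ofReal (c ^ 2) * m ^ k := by
  have hF : Measurable fun x => ENNReal.ofReal (g x ^ 2) := by fun_prop
  simp_rw [mul_pow, ← prod_pow, ENNReal.ofReal_mul (sq_nonneg c),
    ENNReal.ofReal_prod_of_nonneg fun j _ => sq_nonneg (g (ψ j _))]
  rw [lintegral_const_mul _ (by fun_prop),
    lintegral_prod_eq_prod_lintegral_of_indepFun (range k)
      (fun j ω => ENNReal.ofReal (g (ψ j ω) ^ 2)) (hind.comp _ fun _ => hF) fun j => hF.comp (hψ j)]
  simp [hm]

theorem lintegral_ofReal_sq_mul_prod_eq_tsum {κ : Ω → ℕ} {ψ : ℕ → Ω → ℝ} (hκ : Measurable κ)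
    (hψ : ∀ j, Measurable (ψ j)) (hind : iIndepFun ψ P)
    (hκψ : IndepFun κ (fun ω j => ψ j ω) P) {g : ℝ → ℝ} (hg : Measurable g)
    {m : ℝ≥0∞} (hm : ∀ j, ∫⁻ ω, ENNReal.ofReal (g (ψ j ω) ^ 2) ∂P = m) (w : ℕ → ℝ) :
    ∫⁻ ω, ENNReal.ofReal ((w (κ ω) * ∏ j ∈ range (κ ω), g (ψ j ω)) ^ 2) ∂P
      = ∑' k, P (κ ⁻¹' {k}) * (ENNReal.ofReal (w k ^ 2) * m ^ k) := by
  rw [lintegral_comp_nat_eq_tsum_of_indepFun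
    (Φ := fun k v => ENNReal.ofReal ((w k * ∏ j ∈ range k, g (v j)) ^ 2))
    hκ (measurable_pi_lambda _ hψ) hκψ fun k => by fun_prop]
  simp only [lintegral_ofReal_sq_const_mul_prod_of_iIndepFun hψ hind hg hm]

theorem lintegral_ofReal_comp_of_map_eq_uniform {t : ℝ} (ht : 0 < t) {ψ : Ω → ℝ}
    (hψ : Measurable ψ)
    (hlaw : P.map ψ = (ENNReal.ofReal t)⁻¹ • volume.restrict (Set.Icc 0 t))
    {g : ℝ → ℝ} (hg : Measurable g) (hg_int : IntegrableOn g (Set.Icc 0 t))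
    (hg_nonneg : ∀ s, 0 ≤ g s) :
    ∫⁻ ω, ENNReal.ofReal (g (ψ ω)) ∂P = ENNReal.ofReal ((∫ s in 0..t, g s) / t) := by
  have hF : Measurable fun s => ENNReal.ofReal (g s) := by fun_prop
  rw [← lintegral_map hF hψ, hlaw, lintegral_smul_measure,
    ← ofReal_integral_eq_lintegral_ofReal hg_int (ae_of_all _ hg_nonneg),
    intervalIntegral.integral_of_le ht.le, integral_Icc_eq_integral_Ioc,
    ENNReal.ofReal_div_of_pos ht, smul_eq_mul, ENNReal.div_eq_inv_mul]

end

theorem integrableOn_sq_sub_of_abs_le_s5 {h : ℝ → ℝ} (hh : Measurable h) {a b C : ℝ}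
    (hbd : ∀ s ∈ Set.Icc a b, |h s| ≤ C) (U : ℝ) :
    IntegrableOn (fun s => (U - h s) ^ 2) (Set.Icc a b) := by
  refine Measure.integrableOn_of_bounded (M := (|U| + C) ^ 2) measure_Icc_lt_top.ne
    (by fun_prop) ?_
  rw [ae_restrict_iff' measurableSet_Icc]
  refine ae_of_all _ fun s hs => ?_
  rw [norm_pow, Real.norm_eq_abs]
  exact pow_le_pow_left₀ (abs_nonneg _) ((abs_sub _ _).trans (by linarith [hbd s hs])) 2

theorem poisson_mul_sq_weight_mul_pow {U t μ : ℝ} (ht : t ≠ 0) (hμ : μ ≠ 0) (m : ℝ) (k : ℕ) :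
    exp (-(μ * t)) * (μ * t) ^ k / k ! *
        (exp (-(U * t)) * t ^ k / (k ! * (exp (-(μ * t)) * (μ * t) ^ k / k !))) ^ 2 * m ^ k
      = exp (-(2 * U * t) + μ * t) * ((t * m / μ) ^ k / k !) := by
  rw [show exp (-(2 * U * t) + μ * t) = exp (-(U * t)) ^ 2 / exp (-(μ * t)) by
    rw [← exp_nat_mul, ← exp_sub]; ring_nf]
  field_simp
  rw [← mul_pow, show μ * t * (t * m / μ) = t ^ 2 * m by field_simp]
  ring

theorem hasSum_poisson_mul_sq_weight_mul_pow {U t μ : ℝ} (ht : t ≠ 0) (hμ : μ ≠ 0) (m : ℝ) :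
    HasSum (fun k : ℕ => exp (-(μ * t)) * (μ * t) ^ k / k ! *
        (exp (-(U * t)) * t ^ k / (k ! * (exp (-(μ * t)) * (μ * t) ^ k / k !))) ^ 2 * m ^ k)
      (exp (-(2 * U * t) + μ * t + t * m / μ)) := by
  simp_rw [poisson_mul_sq_weight_mul_pow ht hμ, exp_add _ (t * m / μ), exp_eq_exp_ℝ]
  exact (NormedSpace.expSeries_div_hasSum_exp (t * m / μ)).mul_left _

theorem two_sqrt_mul_le_mul_add_div {t b μ : ℝ} (ht : 0 ≤ t) (hb : 0 ≤ b) (hμ : 0 < μ) :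
    2 * √(t * b) ≤ μ * t + b / μ := by
  have hsplit : √(t * b) = √(μ * t) * √(b / μ) := by
    rw [← Real.sqrt_mul (by positivity)]
    congr 1
    field_simp
  rw [hsplit]
  calc 2 * (√(μ * t) * √(b / μ)) ≤ √(μ * t) ^ 2 + √(b / μ) ^ 2 := by
        linarith [two_mul_le_add_sq √(μ * t) √(b / μ)]
    _ = μ * t + b / μ := by rw [sq_sqrt (by positivity), sq_sqrt (by positivity)]

theorem sqrt_div_mul_add_div_sqrt_div {t b : ℝ} (ht : 0 < t) (hb : 0 < b) :
    √(b / t) * t + b / √(b / t) = 2 * √(t * b) := by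
  have hsb : √b ^ 2 = b := sq_sqrt hb.le
  have hst : √t ^ 2 = t := sq_sqrt ht.le
  rw [Real.sqrt_div' b ht.le, Real.sqrt_mul ht.le, ← hsb, ← hst]
  have : √b ≠ 0 := by positivity
  have : √t ≠ 0 := by positivity
  simp only [Real.sqrt_sq (Real.sqrt_nonneg _)]
  field_simp
  ring

theorem gpe_poisson_proposal_second_moment_general
    {Ω : Type*} [MeasurableSpace Ω] (P : Measure Ω)
    (t : ℝ) (ht : 0 < t)
    (h : ℝ → ℝ) (hmeas : Measurable h)
    (Ch : ℝ) (hbd : ∀ s ∈ Set.Icc (0 : ℝ) t, |h s| ≤ Ch)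
    (ψ : ℕ → Ω → ℝ) (hψmeas : ∀ j, Measurable (ψ j))
    (hψlaw : ∀ j, Measure.map (ψ j) P
      = (ENNReal.ofReal t)⁻¹ • volume.restrict (Set.Icc (0 : ℝ) t))
    (hψindep : iIndepFun ψ P)
    (κ : Ω → ℕ) (hκmeas : Measurable κ)
    (hκψindep : IndepFun κ (fun ω => fun j => ψ j ω) P)
    (μ : ℝ) (hμ : 0 < μ)
    (p : ℕ → ℝ)
    (hpdef : ∀ k : ℕ, p k = Real.exp (-(μ * t)) * (μ * t) ^ k / Nat.factorial k)
    (hκlaw : ∀ k : ℕ, P {ω | κ ω = k} = ENNReal.ofReal (p k))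
    (U : ℝ)
    (b : ℝ) (hb : b = ∫ s in (0 : ℝ)..t, (U - h s) ^ 2) :
    (∫⁻ ω, ENNReal.ofReal ((Real.exp (-(U * t)) * t ^ κ ω
          / (Nat.factorial (κ ω) * p (κ ω))
          * ∏ j ∈ Finset.range (κ ω), (U - h (ψ j ω))) ^ 2) ∂P
        = ENNReal.ofReal (Real.exp (-(2 * U * t) + μ * t + b / μ)))
      ∧ (0 < b →
          (∀ μ' : ℝ, 0 < μ' →
              Real.exp (-(2 * U * t) + 2 * Real.sqrt (t * b))
                ≤ Real.exp (-(2 * U * t) + μ' * t + b / μ'))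
            ∧ Real.exp (-(2 * U * t) + Real.sqrt (b / t) * t + b / Real.sqrt (b / t))
                = Real.exp (-(2 * U * t) + 2 * Real.sqrt (t * b))) := by
  refine ⟨?_, fun hb_pos => ⟨fun μ' hμ' => ?_, ?_⟩⟩
  · have hb_nonneg : 0 ≤ b := hb ▸ intervalIntegral.integral_nonneg ht.le fun s _ => sq_nonneg _
    have hfactor : ∀ j, ∫⁻ ω, ENNReal.ofReal ((U - h (ψ j ω)) ^ 2) ∂P
        = ENNReal.ofReal (b / t) := fun j => by
      rw [lintegral_ofReal_comp_of_map_eq_uniform ht (hψmeas j) (hψlaw j) (by fun_prop)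
        (integrableOn_sq_sub_of_abs_le_s5 hmeas hbd U) fun s => sq_nonneg _, hb]
    have hp : ∀ k, 0 ≤ p k := fun k => by rw [hpdef]; positivity
    have hsum := hasSum_poisson_mul_sq_weight_mul_pow (U := U) ht.ne' hμ.ne' (b / t)
    simp only [← hpdef, mul_div_cancel₀ b ht.ne'] at hsum
    rw [lintegral_ofReal_sq_mul_prod_eq_tsum (g := fun s => U - h s) hκmeas hψmeas hψindep
      hκψindep (by fun_prop) hfactor fun k => exp (-(U * t)) * t ^ k / (k ! * p k), ← hsum.tsum_eq,
      ENNReal.ofReal_tsum_of_nonneg (fun k => ?_) hsum.summable]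
    · refine tsum_congr fun k => ?_
      rw [show P (κ ⁻¹' {k}) = _ from hκlaw k, ← ENNReal.ofReal_pow (by positivity),
        ← ENNReal.ofReal_mul (sq_nonneg _), ← ENNReal.ofReal_mul (hp k), mul_assoc]
    · exact mul_nonneg (mul_nonneg (hp k) (sq_nonneg _)) (pow_nonneg (div_nonneg hb_nonneg ht.le) k)
  · exact exp_le_exp.mpr (by linarith [two_sqrt_mul_le_mul_add_div ht.le hb_pos.le hμ'])
  · rw [add_assoc, sqrt_div_mul_add_div_sqrt_div ht hb_pos]

/-- Second moment of the GPE with a Poisson proposal: assume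
`U ≥ sup_{s ∈ [0,t]} h(s)` and let `κ` be Poisson with mean `μt` for some
`μ > 0`, i.e. `p(k) = e^{-μt}(μt)^k / k!`. Then
`E[I²] = exp(-2Ut + μt + b/μ)` where `b = ∫_0^t (U - h(s))² ds`. Moreover, if
`b > 0`, the map `μ' ↦ exp(-2Ut + μ't + b/μ')` on `(0,∞)` attains its minimum
`exp(-2Ut + 2√(tb))` at `μ' = √(b/t)`. -/
theorem gpe_poisson_proposal_second_moment
    {Ω : Type*} [MeasurableSpace Ω] (P : Measure Ω) [IsProbabilityMeasure P]
    (t : ℝ) (ht : 0 < t)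
    (h : ℝ → ℝ) (hmeas : Measurable h)
    (Ch : ℝ) (hbd : ∀ s ∈ Set.Icc (0 : ℝ) t, |h s| ≤ Ch)
    (ψ : ℕ → Ω → ℝ) (hψmeas : ∀ j, Measurable (ψ j))
    (hψlaw : ∀ j, Measure.map (ψ j) P
      = (ENNReal.ofReal t)⁻¹ • volume.restrict (Set.Icc (0 : ℝ) t))
    (hψindep : iIndepFun ψ P)
    (κ : Ω → ℕ) (hκmeas : Measurable κ)
    (hκψindep : IndepFun κ (fun ω => fun j => ψ j ω) P)
    (μ : ℝ) (hμ : 0 < μ)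
    (p : ℕ → ℝ)
    (hpdef : ∀ k : ℕ, p k = Real.exp (-(μ * t)) * (μ * t) ^ k / Nat.factorial k)
    (hκlaw : ∀ k : ℕ, P {ω | κ ω = k} = ENNReal.ofReal (p k))
    (U : ℝ) (hU : ∀ s ∈ Set.Icc (0 : ℝ) t, h s ≤ U)
    (b : ℝ) (hb : b = ∫ s in (0 : ℝ)..t, (U - h s) ^ 2) :
    (∫⁻ ω, ENNReal.ofReal ((Real.exp (-(U * t)) * t ^ κ ω
          / (Nat.factorial (κ ω) * p (κ ω))
          * ∏ j ∈ Finset.range (κ ω), (U - h (ψ j ω))) ^ 2) ∂P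
        = ENNReal.ofReal (Real.exp (-(2 * U * t) + μ * t + b / μ)))
      ∧ (0 < b →
          (∀ μ' : ℝ, 0 < μ' →
              Real.exp (-(2 * U * t) + 2 * Real.sqrt (t * b))
                ≤ Real.exp (-(2 * U * t) + μ' * t + b / μ'))
            ∧ Real.exp (-(2 * U * t) + Real.sqrt (b / t) * t + b / Real.sqrt (b / t))
                = Real.exp (-(2 * U * t) + 2 * Real.sqrt (t * b))) :=
  gpe_poisson_proposal_second_moment_general P t ht h hmeas Ch hbd ψ hψmeas hψlaw hψindep κ hκmeas
    hκψindep μ hμ p hpdef hκlaw U b hb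
end

section
/- Almost-sure bound for GPE-1 (key step of Theorem 2): suppose L, U ∈ ℝ with L < U and L ≤ h(s) ≤ U for all s ∈ [0,t], and let p be the Poisson probability mass function with mean (U−L)t. Then the GPE-1 estimator satisfies I = e^{−Lt} · ∏_{j=1}^{κ} ( (U − h(ψ_j)) / (U − L) ) almost surely, hence 0 ≤ I ≤ e^{−Lt} almost surely, and consequently E[I²] ≤ e^{−2Lt}. -/
open MeasureTheory ProbabilityTheory Real Finset

/-!
With the Poisson proposal of rate `(U - L) t`, the factor `t^κ / (κ! p(κ))` equals
`e^{(U-L)t} / (U - L)^κ`, so the GPE-1 estimator is `e^{-Lt}` times a product of the ratios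
`(U - h(ψ_j)) / (U - L)`. Since the `ψ_j` lie in `[0, t]` almost surely, where
`L ≤ h ≤ U`, each ratio lies in `[0, 1]`, which gives `0 ≤ I ≤ e^{-Lt}` and then the
second-moment bound.
-/

lemma exp_mul_pow_div_factorial_mul_poisson {t L U : ℝ} (ht : 0 < t) (hLU : L < U) (k : ℕ)
    (y : ℕ → ℝ) :
    exp (-(U * t)) * t ^ k
        / (k.factorial * (exp (-((U - L) * t)) * ((U - L) * t) ^ k / k.factorial))
        * ∏ j ∈ range k, (U - y j)
      = exp (-(L * t)) * ∏ j ∈ range k, ((U - y j) / (U - L)) := by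
  have hUL : 0 < U - L := sub_pos.mpr hLU
  have hfac : (0 : ℝ) < k.factorial := mod_cast k.factorial_pos
  have hexp : exp (-(U * t)) = exp (-(L * t)) * exp (-((U - L) * t)) := by
    rw [← exp_add]; ring_nf
  rw [prod_div_distrib, prod_const, card_range, hexp, mul_pow]
  field_simp

lemma sub_div_sub_mem_Icc {L U x : ℝ} (hLU : L < U) (hx : x ∈ Set.Icc L U) :
    (U - x) / (U - L) ∈ Set.Icc (0 : ℝ) 1 := by
  have hUL : 0 < U - L := sub_pos.mpr hLU
  exact ⟨div_nonneg (by linarith [hx.2]) hUL.le, (div_le_one hUL).2 (by linarith [hx.1])⟩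

lemma prod_mem_Icc_zero_one {ι : Type*} {s : Finset ι} {f : ι → ℝ}
    (hf : ∀ i ∈ s, f i ∈ Set.Icc (0 : ℝ) 1) : ∏ i ∈ s, f i ∈ Set.Icc (0 : ℝ) 1 :=
  ⟨prod_nonneg fun i hi => (hf i hi).1, prod_le_one (fun i hi => (hf i hi).1) fun i hi => (hf i hi).2⟩

lemma lintegral_ofReal_sq_le_of_ae_mem_Icc {Ω : Type*} [MeasurableSpace Ω] {P : Measure Ω}
    [IsProbabilityMeasure P] {X : Ω → ℝ} {c : ℝ} (hX : ∀ᵐ ω ∂P, X ω ∈ Set.Icc 0 c) :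
    ∫⁻ ω, ENNReal.ofReal (X ω ^ 2) ∂P ≤ ENNReal.ofReal (c ^ 2) :=
  calc ∫⁻ ω, ENNReal.ofReal (X ω ^ 2) ∂P ≤ ∫⁻ _, ENNReal.ofReal (c ^ 2) ∂P :=
        lintegral_mono_ae <| hX.mono fun ω hω =>
          ENNReal.ofReal_le_ofReal (pow_le_pow_left₀ hω.1 hω.2 2)
    _ = ENNReal.ofReal (c ^ 2) := by simp

theorem gpe1_almost_sure_bound_general
    {Ω : Type*} [MeasurableSpace Ω] (P : Measure Ω) [IsProbabilityMeasure P]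
    (t : ℝ) (ht : 0 < t)
    (h : ℝ → ℝ)
    (ψ : ℕ → Ω → ℝ) (hψmeas : ∀ j, Measurable (ψ j))
    (hψlaw : ∀ j, Measure.map (ψ j) P
      = (ENNReal.ofReal t)⁻¹ • volume.restrict (Set.Icc (0 : ℝ) t))
    (κ : Ω → ℕ)
    (L U : ℝ) (hLU : L < U)
    (hbd : ∀ s ∈ Set.Icc (0 : ℝ) t, L ≤ h s ∧ h s ≤ U)
    (p : ℕ → ℝ)
    (hpdef : ∀ k : ℕ, p k
      = Real.exp (-((U - L) * t)) * ((U - L) * t) ^ k / Nat.factorial k)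
    (I : Ω → ℝ)
    (hIdef : ∀ ω, I ω = Real.exp (-(U * t)) * t ^ κ ω
        / (Nat.factorial (κ ω) * p (κ ω))
        * ∏ j ∈ Finset.range (κ ω), (U - h (ψ j ω))) :
    (∀ᵐ ω ∂P, I ω = Real.exp (-(L * t))
        * ∏ j ∈ Finset.range (κ ω), ((U - h (ψ j ω)) / (U - L)))
      ∧ (∀ᵐ ω ∂P, 0 ≤ I ω ∧ I ω ≤ Real.exp (-(L * t)))
      ∧ ∫⁻ ω, ENNReal.ofReal ((I ω) ^ 2) ∂P
          ≤ ENNReal.ofReal (Real.exp (-(2 * L * t))) := by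
  have hI : ∀ ω, I ω = exp (-(L * t)) * ∏ j ∈ range (κ ω), ((U - h (ψ j ω)) / (U - L)) :=
    fun ω => by rw [hIdef, hpdef, exp_mul_pow_div_factorial_mul_poisson ht hLU]
  have hψ : ∀ᵐ ω ∂P, ∀ j, ψ j ω ∈ Set.Icc 0 t := ae_all_iff.2 fun j =>
    ae_of_ae_map (hψmeas j).aemeasurable <| by
      rw [hψlaw j]; exact Measure.ae_smul_measure (ae_restrict_mem measurableSet_Icc) _
  have hI_mem : ∀ᵐ ω ∂P, I ω ∈ Set.Icc 0 (exp (-(L * t))) := by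
    filter_upwards [hψ] with ω hω
    have hprod := prod_mem_Icc_zero_one fun j (_ : j ∈ range (κ ω)) =>
      sub_div_sub_mem_Icc hLU (hbd _ (hω j))
    rw [hI]
    exact ⟨mul_nonneg (exp_nonneg _) hprod.1, mul_le_of_le_one_right (exp_nonneg _) hprod.2⟩
  refine ⟨.of_forall hI, hI_mem, ?_⟩
  calc ∫⁻ ω, ENNReal.ofReal (I ω ^ 2) ∂P ≤ ENNReal.ofReal (exp (-(L * t)) ^ 2) :=
        lintegral_ofReal_sq_le_of_ae_mem_Icc hI_mem
    _ = ENNReal.ofReal (exp (-(2 * L * t))) := by rw [← exp_nat_mul]; ring_nf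

/-- Almost-sure bound for GPE-1 (key step of Theorem 2): suppose `L < U` and
`L ≤ h(s) ≤ U` for all `s ∈ [0,t]`, and let `p` be the Poisson probability mass
function with mean `(U-L)t`. Then the GPE-1 estimator
`I = e^{-Ut} (t^κ / (κ! p(κ))) ∏_{j=1}^{κ} (U - h(ψ_j))` satisfies
`I = e^{-Lt} ∏_{j=1}^{κ} ((U - h(ψ_j)) / (U - L))` almost surely, hence
`0 ≤ I ≤ e^{-Lt}` almost surely, and consequently `E[I²] ≤ e^{-2Lt}`. -/
theorem gpe1_almost_sure_bound
    {Ω : Type*} [MeasurableSpace Ω] (P : Measure Ω) [IsProbabilityMeasure P]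
    (t : ℝ) (ht : 0 < t)
    (h : ℝ → ℝ) (hmeas : Measurable h)
    (ψ : ℕ → Ω → ℝ) (hψmeas : ∀ j, Measurable (ψ j))
    (hψlaw : ∀ j, Measure.map (ψ j) P
      = (ENNReal.ofReal t)⁻¹ • volume.restrict (Set.Icc (0 : ℝ) t))
    (hψindep : iIndepFun ψ P)
    (κ : Ω → ℕ) (hκmeas : Measurable κ)
    (hκψindep : IndepFun κ (fun ω => fun j => ψ j ω) P)
    (L U : ℝ) (hLU : L < U)
    (hbd : ∀ s ∈ Set.Icc (0 : ℝ) t, L ≤ h s ∧ h s ≤ U)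
    (p : ℕ → ℝ)
    (hpdef : ∀ k : ℕ, p k
      = Real.exp (-((U - L) * t)) * ((U - L) * t) ^ k / Nat.factorial k)
    (hκlaw : ∀ k : ℕ, P {ω | κ ω = k} = ENNReal.ofReal (p k))
    (I : Ω → ℝ)
    (hIdef : ∀ ω, I ω = Real.exp (-(U * t)) * t ^ κ ω
        / (Nat.factorial (κ ω) * p (κ ω))
        * ∏ j ∈ Finset.range (κ ω), (U - h (ψ j ω))) :
    (∀ᵐ ω ∂P, I ω = Real.exp (-(L * t))
        * ∏ j ∈ Finset.range (κ ω), ((U - h (ψ j ω)) / (U - L)))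
      ∧ (∀ᵐ ω ∂P, 0 ≤ I ω ∧ I ω ≤ Real.exp (-(L * t)))
      ∧ ∫⁻ ω, ENNReal.ofReal ((I ω) ^ 2) ∂P
          ≤ ENNReal.ofReal (Real.exp (-(2 * L * t))) :=
  gpe1_almost_sure_bound_general P t ht h ψ hψmeas hψlaw κ L U hLU hbd p hpdef I hIdef
end

section
/- Theorem 2 (finite variance of GPE-1, core estimate): let d ≥ 1, t > 0, x, z ∈ ℝ^d, and let B be a standard d-dimensional Brownian motion. Define the Brownian bridge from x at time 0 to z at time t by W_s = x + (s/t)(z − x) + B_s − (s/t) B_t for s ∈ [0,t]. Suppose g : ℝ^d → ℝ is continuous and there exists δ ≥ 0 such that g(u_1,…,u_d) ≥ −δ ∑_{i=1}^{d} (1 + |u_i|) for all u ∈ ℝ^d. Then E[ exp( −2t · inf_{s∈[0,t]} g(W_s) ) ] < ∞; in particular the lower bound L_W = inf_{s∈[0,t]} g(W_s) satisfies E[e^{−2 L_W t}] < ∞, so the GPE-1 estimator (whose conditional second moment given the path is at most e^{−2 L_W t}) has finite variance. -/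
/-!
On the event that every level-`n` dyadic increment of `B` on `[0, t]` is at most
`(m + n) √t (3/4)^n`, chaining through the dyadic points and continuity of the paths give
`sup_{[0,t]} ‖B‖ ≤ √t (4m + 12)`; with the bridge formula and the growth bound on `g`, the
integrand is then at most `exp (A + a m)` for constants `A`, `a`. Each increment is Gaussian
with variance `t / 2^n`, so a union bound over the `2^n` increments of every level, with the
sub-Gaussian Chernoff tail, shows that this event fails with probability `O(exp (-m² / 2))`.
This beats `exp (a m)`, and summing over the layers `m` proves the expectation finite.
-/

open MeasureTheory ProbabilityTheory Real Filter Set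
open scoped ENNReal NNReal Topology

lemma hasSubgaussianMGF_id_gaussianReal (v : ℝ≥0) :
    HasSubgaussianMGF id v (gaussianReal 0 v) where
  integrable_exp_mul := integrable_exp_mul_gaussianReal
  mgf_le t := by simp [mgf_id_gaussianReal]

lemma ProbabilityTheory.HasSubgaussianMGF.measure_abs_ge_le {Ω : Type*} [MeasurableSpace Ω]
    {μ : Measure Ω} [IsProbabilityMeasure μ] {X : Ω → ℝ} {c : ℝ≥0} (h : HasSubgaussianMGF X c μ)
    {ε : ℝ} (hε : 0 ≤ ε) :
    μ {ω | ε ≤ |X ω|} ≤ ENNReal.ofReal (2 * exp (-ε ^ 2 / (2 * c))) := by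
  have hsub : {ω | ε ≤ |X ω|} ⊆ {ω | ε ≤ X ω} ∪ {ω | ε ≤ (-X) ω} :=
    fun ω (hω : ε ≤ |X ω|) => le_abs.1 hω
  calc μ {ω | ε ≤ |X ω|} ≤ μ {ω | ε ≤ X ω} + μ {ω | ε ≤ (-X) ω} :=
        (measure_mono hsub).trans (measure_union_le _ _)
    _ ≤ ENNReal.ofReal (exp (-ε ^ 2 / (2 * c))) + ENNReal.ofReal (exp (-ε ^ 2 / (2 * c))) := by
        rw [← ofReal_measureReal, ← ofReal_measureReal]
        gcongr
        exacts [h.measure_ge_le hε, h.neg.measure_ge_le hε]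
    _ = ENNReal.ofReal (2 * exp (-ε ^ 2 / (2 * c))) := by
        rw [← ENNReal.ofReal_add (exp_pos _).le (exp_pos _).le, ← two_mul]

lemma measure_lt_norm_le_of_map_eq_pi_gaussianReal {ι Ω : Type*} [Fintype ι] [MeasurableSpace Ω]
    {P : Measure Ω} [IsProbabilityMeasure P] {Y : Ω → ι → ℝ} (hY : Measurable Y) {v : ℝ≥0}
    (hlaw : P.map Y = Measure.pi fun _ => gaussianReal 0 v) {a : ℝ} (ha : 0 ≤ a) :
    P {ω | a < ‖Y ω‖} ≤ Fintype.card ι * ENNReal.ofReal (2 * exp (-a ^ 2 / (2 * v))) := by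
  have hsub : {ω | a < ‖Y ω‖} ⊆ ⋃ i, {ω | a ≤ |Y ω i|} := by
    intro ω hω
    by_contra hnot
    simp only [mem_iUnion, mem_ofPred_eq, not_exists, not_le] at hnot
    exact (not_lt.2 ((pi_norm_le_iff_of_nonneg ha).2 fun i => (hnot i).le)) hω
  have hcoord (i : ι) : HasSubgaussianMGF (fun ω => Y ω i) v P := by
    have hlaw_i : (P.map Y).map (Function.eval i) = gaussianReal 0 v := by
      rw [hlaw, (measurePreserving_eval _ i).map_eq]
    have h := hasSubgaussianMGF_id_gaussianReal v
    rw [← hlaw_i, HasSubgaussianMGF.id_map_iff (measurable_pi_apply i).aemeasurable] at h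
    exact h.of_map hY.aemeasurable
  calc P {ω | a < ‖Y ω‖} ≤ ∑ i, P {ω | a ≤ |Y ω i|} :=
        (measure_mono hsub).trans (measure_iUnion_fintype_le _ _)
    _ ≤ ∑ _i : ι, ENNReal.ofReal (2 * exp (-a ^ 2 / (2 * v))) :=
        Finset.sum_le_sum fun i _ => (hcoord i).measure_abs_ge_le ha
    _ = _ := by simp

lemma norm_le_sum_of_dyadic_increments_le {E : Type*} [SeminormedAddCommGroup E]
    {F : ℕ → ℕ → E} (h0 : F 0 0 = 0) (hF : ∀ N k, F (N + 1) (2 * k) = F N k)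
    {a : ℕ → ℝ} (ha : ∀ n, 0 ≤ a n) (hinc : ∀ n k, k < 2 ^ n → ‖F n (k + 1) - F n k‖ ≤ a n) :
    ∀ N k, k ≤ 2 ^ N → ‖F N k‖ ≤ ∑ j ∈ Finset.range (N + 1), a j := by
  intro N
  induction N with
  | zero =>
    intro k hk
    interval_cases k
    · simpa [h0] using ha 0
    · simpa [h0] using hinc 0 0 one_pos
  | succ N ih =>
    intro k hk
    rw [Finset.sum_range_succ]
    rw [pow_succ] at hk
    obtain ⟨k, rfl | rfl⟩ := Nat.even_or_odd' k
    · rw [hF]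
      linarith [ih k (by omega), ha (N + 1)]
    · calc ‖F (N + 1) (2 * k + 1)‖
          ≤ ‖F (N + 1) (2 * k)‖ + ‖F (N + 1) (2 * k + 1) - F (N + 1) (2 * k)‖ :=
            norm_le_insert' _ _
        _ ≤ ∑ j ∈ Finset.range (N + 1), a j + a (N + 1) := by
            refine add_le_add ?_ (hinc (N + 1) (2 * k) (by rw [pow_succ]; omega))
            rw [hF]
            exact ih k (by omega)

lemma norm_le_of_dyadic_increments_le {E : Type*} [SeminormedAddCommGroup E] {f : ℝ → E}
    (hf : Continuous f) (h0 : f 0 = 0) {t : ℝ} (ht : 0 < t) {a : ℕ → ℝ} {c : ℝ}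
    (ha : ∀ n, 0 ≤ a n) (hac : HasSum a c)
    (hinc : ∀ n k : ℕ, k < 2 ^ n → ‖f ((k + 1) * t / 2 ^ n) - f (k * t / 2 ^ n)‖ ≤ a n)
    {s : ℝ} (hs : s ∈ Icc 0 t) : ‖f s‖ ≤ c := by
  have hdyadic (N k : ℕ) (hk : k ≤ 2 ^ N) : ‖f (k * t / 2 ^ N)‖ ≤ c :=
    (norm_le_sum_of_dyadic_increments_le (F := fun N k => f (k * t / 2 ^ N)) (by simp [h0])
      (fun N k => by congr 1; push_cast; ring) ha (fun n k hk => by push_cast; exact hinc n k hk)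
      N k hk).trans (sum_le_hasSum _ (fun j _ => ha j) hac)
  have hst : s / t ≤ 1 := (div_le_one ht).2 hs.2
  have hu : Tendsto (fun N : ℕ => (⌊s / t * 2 ^ N⌋₊ : ℝ) * t / 2 ^ N) atTop (𝓝 s) := by
    have := ((tendsto_nat_floor_mul_div_atTop (div_nonneg hs.1 ht.le)).comp
      (tendsto_pow_atTop_atTop_of_one_lt one_lt_two)).mul_const t
    rw [div_mul_cancel₀ _ ht.ne'] at this
    convert this using 2 with N
    simp only [Function.comp_apply]
    ring
  refine le_of_tendsto ((hf.norm.tendsto s).comp hu) (Eventually.of_forall fun N => hdyadic N _ ?_)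
  exact Nat.floor_le_of_le (by push_cast; exact mul_le_of_le_one_left (by positivity) hst)

lemma lintegral_le_of_le_on_layers {Ω : Type*} [MeasurableSpace Ω] {μ : Measure Ω}
    {G : ℕ → Set Ω} (hGm : ∀ m, MeasurableSet (G m)) (hG : ∀ᵐ ω ∂μ, ∃ m, ω ∈ G m)
    {f : Ω → ℝ≥0∞} {c : ℕ → ℝ≥0∞} (hf : ∀ m, ∀ ω ∈ G m, f ω ≤ c m) :
    ∫⁻ ω, f ω ∂μ ≤ c 0 * μ univ + ∑' k, c (k + 1) * μ (G k)ᶜ := by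
  classical
  have hpt : ∀ᵐ ω ∂μ, f ω ≤ c 0 + ∑' k, (G k)ᶜ.indicator (fun _ => c (k + 1)) ω := by
    filter_upwards [hG] with ω hω
    have hmem := Nat.find_spec hω
    rcases h : Nat.find hω with _ | k
    · rw [h] at hmem
      exact (hf 0 ω hmem).trans le_self_add
    · rw [h] at hmem
      have hk : ω ∈ (G k)ᶜ := Nat.find_min hω (by omega)
      calc f ω ≤ (G k)ᶜ.indicator (fun _ => c (k + 1)) ω := by
            rw [indicator_of_mem hk]; exact hf _ ω hmem
        _ ≤ _ := (ENNReal.le_tsum k).trans le_add_self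
  calc ∫⁻ ω, f ω ∂μ ≤ ∫⁻ ω, c 0 + ∑' k, (G k)ᶜ.indicator (fun _ => c (k + 1)) ω ∂μ :=
        lintegral_mono_ae hpt
    _ = c 0 * μ univ + ∑' k, c (k + 1) * μ (G k)ᶜ := by
        rw [lintegral_add_left measurable_const, lintegral_const,
          lintegral_tsum fun k => (measurable_const.indicator (hGm k).compl).aemeasurable]
        simp only [lintegral_indicator_const (hGm _).compl]

lemma summable_exp_mul_sub_mul_sq (a : ℝ) {b : ℝ} (hb : 0 < b) :
    Summable fun n : ℕ => exp (a * n - b * n ^ 2) := by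
  refine summable_exp_neg_nat.of_norm_bounded_eventually_nat ?_
  filter_upwards [eventually_ge_atTop ⌈(a + 1) / b⌉₊] with n hn
  rw [norm_of_nonneg (exp_pos _).le, exp_le_exp]
  have := (div_le_iff₀ hb).1 (Nat.ceil_le.1 hn)
  nlinarith [(Nat.cast_nonneg n : (0 : ℝ) ≤ n)]

lemma lintegral_lt_top_of_le_exp_on_layers {Ω : Type*} [MeasurableSpace Ω] {μ : Measure Ω}
    [IsFiniteMeasure μ] {G : ℕ → Set Ω} (hGm : ∀ m, MeasurableSet (G m)) {K b : ℝ}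
    (hK : 0 ≤ K) (hb : 0 < b)
    (htail : ∀ m : ℕ, μ (G m)ᶜ ≤ ENNReal.ofReal (K * exp (-(b * m ^ 2))))
    {f : Ω → ℝ≥0∞} {A a : ℝ}
    (hf : ∀ m : ℕ, ∀ ω ∈ G m, f ω ≤ ENNReal.ofReal (exp (A + a * m))) :
    ∫⁻ ω, f ω ∂μ < ∞ := by
  have hsum (a : ℝ) : ∑' m : ℕ, ENNReal.ofReal (exp (a * m)) * μ (G m)ᶜ < ∞ := by
    calc ∑' m : ℕ, ENNReal.ofReal (exp (a * m)) * μ (G m)ᶜ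
        ≤ ∑' m : ℕ, ENNReal.ofReal (K * exp (a * m - b * m ^ 2)) := by
          refine ENNReal.tsum_le_tsum fun m => (mul_le_mul_right (htail m) _).trans_eq ?_
          rw [← ENNReal.ofReal_mul (exp_pos _).le, sub_eq_add_neg, exp_add]
          ring_nf
      _ = ENNReal.ofReal (∑' m : ℕ, K * exp (a * m - b * m ^ 2)) :=
          (ENNReal.ofReal_tsum_of_nonneg (fun m => by positivity)
            ((summable_exp_mul_sub_mul_sq a hb).mul_left K)).symm
      _ < ∞ := ENNReal.ofReal_lt_top
  have hG : ∀ᵐ ω ∂μ, ∃ m, ω ∈ G m := by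
    filter_upwards [ae_eventually_notMem (by simpa using (hsum 0).ne)] with ω hω
    simpa using hω.exists
  have hc (k : ℕ) : ENNReal.ofReal (exp (A + a * (k + 1 : ℕ))) =
      ENNReal.ofReal (exp (A + a)) * ENNReal.ofReal (exp (a * k)) := by
    rw [← ENNReal.ofReal_mul (exp_pos _).le, ← exp_add]
    push_cast; ring_nf
  refine (lintegral_le_of_le_on_layers hGm hG hf).trans_lt ?_
  simp only [hc, mul_assoc, ENNReal.tsum_mul_left]
  exact ENNReal.add_lt_top.2 ⟨ENNReal.mul_lt_top ENNReal.ofReal_lt_top (measure_lt_top _ _),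
    ENNReal.mul_lt_top ENNReal.ofReal_lt_top (hsum a)⟩

lemma norm_bridge_le {E : Type*} [SeminormedAddCommGroup E] [NormedSpace ℝ E] {s t : ℝ}
    (hs : s ∈ Icc 0 t) (x z b b' : E) :
    ‖x + (s / t) • (z - x) + b - (s / t) • b'‖ ≤ ‖x‖ + ‖z - x‖ + ‖b‖ + ‖b'‖ := by
  have ht : 0 ≤ t := hs.1.trans hs.2
  have hst : ‖s / t‖ ≤ 1 := by
    rw [norm_of_nonneg (div_nonneg hs.1 ht)]
    exact div_le_one_of_le₀ hs.2 ht
  have hsmul (v : E) : ‖(s / t) • v‖ ≤ ‖v‖ := by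
    rw [norm_smul]; exact mul_le_of_le_one_left (norm_nonneg _) hst
  calc ‖x + (s / t) • (z - x) + b - (s / t) • b'‖
      ≤ ‖x‖ + ‖(s / t) • (z - x)‖ + ‖b‖ + ‖(s / t) • b'‖ :=
        (norm_sub_le _ _).trans (by gcongr; exact norm_add₃_le)
    _ ≤ ‖x‖ + ‖z - x‖ + ‖b‖ + ‖b'‖ := by gcongr <;> exact hsmul _

lemma neg_le_iInf_of_norm_le {d : ℕ} {g : (Fin d → ℝ) → ℝ} {δ : ℝ} (hδ : 0 ≤ δ)
    (hgrowth : ∀ u : Fin d → ℝ, -(δ * ∑ i, (1 + |u i|)) ≤ g u) {t R : ℝ} (ht : 0 ≤ t)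
    {w : ℝ → Fin d → ℝ} (hw : ∀ s ∈ Icc 0 t, ‖w s‖ ≤ R) :
    -(δ * (d * (1 + R))) ≤ ⨅ s : Icc 0 t, g (w s) := by
  have : Nonempty (Icc 0 t) := ⟨⟨0, le_rfl, ht⟩⟩
  refine le_ciInf fun s => (neg_le_neg ?_).trans (hgrowth (w s))
  gcongr
  calc ∑ i, (1 + |w s i|) ≤ ∑ _i : Fin d, (1 + R) := Finset.sum_le_sum fun i _ => by
        gcongr; exact (norm_le_pi_norm (w s) i).trans (hw s s.2)
    _ = d * (1 + R) := by
        simp only [Finset.sum_const, Finset.card_univ, Fintype.card_fin, nsmul_eq_mul]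

def dyadicIncrementsLE {Ω E : Type*} [SeminormedAddCommGroup E] (B : ℝ → Ω → E) (t : ℝ)
    (ℓ : ℕ → ℝ) : Set Ω :=
  {ω | ∀ n k : ℕ, k < 2 ^ n → ‖B ((k + 1) * t / 2 ^ n) ω - B (k * t / 2 ^ n) ω‖ ≤ ℓ n}

lemma measurableSet_dyadicIncrementsLE {Ω E : Type*} [MeasurableSpace Ω]
    [NormedAddCommGroup E] [MeasurableSpace E] [BorelSpace E] [SecondCountableTopology E]
    {B : ℝ → Ω → E} (hBmeas : ∀ s, Measurable (B s)) (t : ℝ) (ℓ : ℕ → ℝ) :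
    MeasurableSet (dyadicIncrementsLE B t ℓ) := by
  simp only [dyadicIncrementsLE, ofPred_forall]
  exact .iInter fun n => .iInter fun k => .iInter fun _ =>
    measurableSet_le ((hBmeas _).sub (hBmeas _)).norm measurable_const

/-- `(3/4)^n` dominates the standard deviation `√t (1/√2)^n` of a level-`n` dyadic increment,
while `∑ₙ (3/4)^n` stays finite. -/
noncomputable def chainingLevel (t : ℝ) (m n : ℕ) : ℝ := (m + n) * √t * (3 / 4) ^ n

lemma hasSum_chainingLevel (t : ℝ) (m : ℕ) :
    HasSum (chainingLevel t m) (√t * (4 * m + 12)) := by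
  have hgeom :=
    (hasSum_geometric_of_lt_one (by norm_num : (0 : ℝ) ≤ 3 / 4) (by norm_num)).mul_left (m : ℝ)
  have harith := hasSum_coe_mul_geometric_of_norm_lt_one (r := (3 / 4 : ℝ)) (by norm_num)
  have hlevel : chainingLevel t m = fun n : ℕ => (m * (3 / 4) ^ n + n * (3 / 4) ^ n) * √t := by
    funext n; simp only [chainingLevel]; ring
  rw [hlevel]
  have hsum := (hgeom.add harith).mul_right √t
  rwa [show ((m : ℝ) * (1 - 3 / 4)⁻¹ + 3 / 4 / (1 - 3 / 4) ^ 2) * √t = √t * (4 * m + 12) by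
    norm_num; ring] at hsum

lemma exp_neg_chainingLevel_sq_le {t : ℝ} (ht : 0 < t) (m n : ℕ) :
    exp (-chainingLevel t m n ^ 2 / (2 * (t / 2 ^ n))) ≤ exp (-(m + n) ^ 2 / 2) := by
  have h98 : ((3 : ℝ) / 4) ^ (2 * n) * 2 ^ n = (9 / 8) ^ n := by
    rw [pow_mul, ← mul_pow]; norm_num
  have hsq : chainingLevel t m n ^ 2 / (2 * (t / 2 ^ n)) = (m + n) ^ 2 * (9 / 8) ^ n / 2 := by
    rw [chainingLevel, mul_pow, mul_pow, sq_sqrt ht.le, ← h98, ← pow_mul, mul_comm 2 n]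
    field_simp
  rw [exp_le_exp, neg_div, neg_div, neg_le_neg_iff, hsq]
  gcongr
  exact le_mul_of_one_le_right (by positivity) (one_le_pow₀ (by norm_num))

lemma chainingLevel_nonneg (t : ℝ) (m n : ℕ) : 0 ≤ chainingLevel t m n := by
  unfold chainingLevel; positivity

lemma norm_le_of_mem_dyadicIncrementsLE {Ω E : Type*} [SeminormedAddCommGroup E]
    {B : ℝ → Ω → E} (hBcont : ∀ ω, Continuous fun s => B s ω) (hB0 : ∀ ω, B 0 ω = 0)
    {t : ℝ} (ht : 0 < t) {m : ℕ} {ω : Ω}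
    (hω : ω ∈ dyadicIncrementsLE B t (chainingLevel t m)) {s : ℝ} (hs : s ∈ Icc 0 t) :
    ‖B s ω‖ ≤ √t * (4 * m + 12) :=
  norm_le_of_dyadic_increments_le (hBcont ω) (hB0 ω) ht (chainingLevel_nonneg t m)
    (hasSum_chainingLevel t m) hω hs

lemma two_pow_mul_exp_neg_add_sq_le (m n : ℕ) :
    (2 : ℝ) ^ n * exp (-(m + n) ^ 2 / 2) ≤ exp (-(1 / 2 * m ^ 2)) * exp (n - 1 / 2 * n ^ 2) := by
  have h2 : (2 : ℝ) ^ n ≤ exp n := by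
    rw [← exp_one_pow]
    gcongr
    linarith [add_one_le_exp (1 : ℝ)]
  calc (2 : ℝ) ^ n * exp (-(m + n) ^ 2 / 2) ≤ exp n * exp (-(m + n) ^ 2 / 2) := by gcongr
    _ ≤ exp (-(1 / 2 * m ^ 2)) * exp (n - 1 / 2 * n ^ 2) := by
      rw [← exp_add, ← exp_add, exp_le_exp]
      nlinarith [(Nat.cast_nonneg m : (0 : ℝ) ≤ m), (Nat.cast_nonneg n : (0 : ℝ) ≤ n)]

section Brownian

variable {Ω : Type*} [MeasurableSpace Ω] {P : Measure Ω} [IsProbabilityMeasure P] {d : ℕ}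
  {B : ℝ → Ω → Fin d → ℝ} {t : ℝ}

lemma measure_chainingLevel_lt_norm_increment_le (hBmeas : ∀ s, Measurable (B s))
    (hBgauss : ∀ u v : ℝ, u ≤ v →
      Measure.map (fun ω => B v ω - B u ω) P
        = Measure.pi fun _ : Fin d => gaussianReal 0 (v - u).toNNReal)
    (ht : 0 < t) (m n k : ℕ) :
    P {ω | chainingLevel t m n < ‖B ((k + 1) * t / 2 ^ n) ω - B (k * t / 2 ^ n) ω‖}
      ≤ d * ENNReal.ofReal (2 * exp (-(m + n) ^ 2 / 2)) := by
  have hlen : ((k + 1) * t / 2 ^ n - k * t / 2 ^ n : ℝ) = t / 2 ^ n := by ring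
  have hle : (k * t / 2 ^ n : ℝ) ≤ (k + 1) * t / 2 ^ n := by gcongr; linarith
  have hlaw := hBgauss _ _ hle
  rw [hlen] at hlaw
  have h := measure_lt_norm_le_of_map_eq_pi_gaussianReal ((hBmeas _).sub (hBmeas _)) hlaw
    (chainingLevel_nonneg t m n)
  rw [Fintype.card_fin, Real.coe_toNNReal _ (by positivity)] at h
  refine h.trans ?_
  gcongr (d : ℝ≥0∞) * ENNReal.ofReal (2 * ?_)
  exact exp_neg_chainingLevel_sq_le ht m n

lemma measure_compl_dyadicIncrementsLE_le (hBmeas : ∀ s, Measurable (B s))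
    (hBgauss : ∀ u v : ℝ, u ≤ v →
      Measure.map (fun ω => B v ω - B u ω) P
        = Measure.pi fun _ : Fin d => gaussianReal 0 (v - u).toNNReal)
    (ht : 0 < t) (m : ℕ) :
    P (dyadicIncrementsLE B t (chainingLevel t m))ᶜ ≤ ENNReal.ofReal
      (2 * d * (∑' n : ℕ, exp (n - 1 / 2 * n ^ 2)) * exp (-(1 / 2 * m ^ 2))) := by
  have hsub : (dyadicIncrementsLE B t (chainingLevel t m))ᶜ ⊆
      ⋃ n : ℕ, ⋃ k ∈ Finset.range (2 ^ n),
        {ω | chainingLevel t m n < ‖B ((k + 1) * t / 2 ^ n) ω - B (k * t / 2 ^ n) ω‖} := by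
    intro ω hω
    simpa [dyadicIncrementsLE] using hω
  have hsummable := ((summable_exp_mul_sub_mul_sq 1 (by norm_num : (0 : ℝ) < 1 / 2)).congr
    fun n => by rw [one_mul]).mul_left (2 * d * exp (-(1 / 2 * m ^ 2)))
  calc P (dyadicIncrementsLE B t (chainingLevel t m))ᶜ
      ≤ ∑' n : ℕ, ∑ k ∈ Finset.range (2 ^ n),
          P {ω | chainingLevel t m n < ‖B ((k + 1) * t / 2 ^ n) ω - B (k * t / 2 ^ n) ω‖} :=
        (measure_mono hsub).trans ((measure_iUnion_le _).trans
          (ENNReal.tsum_le_tsum fun n => measure_biUnion_finset_le _ _))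
    _ ≤ ∑' n : ℕ, ENNReal.ofReal
          (2 * d * exp (-(1 / 2 * m ^ 2)) * exp (n - 1 / 2 * n ^ 2)) := by
        refine ENNReal.tsum_le_tsum fun n => ?_
        refine (Finset.sum_le_sum fun k _ =>
          measure_chainingLevel_lt_norm_increment_le hBmeas hBgauss ht m n k).trans ?_
        rw [Finset.sum_const, Finset.card_range, nsmul_eq_mul,
          show ((2 ^ n : ℕ) : ℝ≥0∞) * (d * ENNReal.ofReal (2 * exp (-(m + n) ^ 2 / 2)))
            = ENNReal.ofReal (2 ^ n * (d * (2 * exp (-(m + n) ^ 2 / 2)))) by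
            rw [ENNReal.ofReal_mul (by positivity), ENNReal.ofReal_mul (by positivity)]; simp]
        refine ENNReal.ofReal_le_ofReal ?_
        have := two_pow_mul_exp_neg_add_sq_le m n
        nlinarith [(Nat.cast_nonneg d : (0 : ℝ) ≤ d)]
    _ = ENNReal.ofReal
          (2 * d * (∑' n : ℕ, exp (n - 1 / 2 * n ^ 2)) * exp (-(1 / 2 * m ^ 2))) := by
        rw [← ENNReal.ofReal_tsum_of_nonneg (fun n => by positivity) hsummable, tsum_mul_left]
        ring_nf

end Brownian

theorem gpe1_finite_variance_core_general
    {Ω : Type*} [MeasurableSpace Ω] (P : Measure Ω) [IsProbabilityMeasure P]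
    (d : ℕ) (t : ℝ) (ht : 0 < t) (x z : Fin d → ℝ)
    (B : ℝ → Ω → Fin d → ℝ)
    (hBmeas : ∀ s, Measurable (B s))
    (hBcont : ∀ ω, Continuous fun s => B s ω)
    (hB0 : ∀ ω, B 0 ω = 0)
    (hBgauss : ∀ u v : ℝ, u ≤ v →
      Measure.map (fun ω => B v ω - B u ω) P
        = Measure.pi fun _ : Fin d => gaussianReal 0 (v - u).toNNReal)
    (g : (Fin d → ℝ) → ℝ)
    (δ : ℝ) (hδ : 0 ≤ δ)
    (hgrowth : ∀ u : Fin d → ℝ, -(δ * ∑ i, (1 + |u i|)) ≤ g u)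
    (W : ℝ → Ω → Fin d → ℝ)
    (hW : ∀ s ω, W s ω = x + (s / t) • (z - x) + B s ω - (s / t) • B t ω) :
    ∫⁻ ω, ENNReal.ofReal
        (Real.exp (-2 * t * ⨅ s : Set.Icc (0 : ℝ) t, g (W s ω))) ∂P < ⊤ := by
  refine lintegral_lt_top_of_le_exp_on_layers
    (fun m => measurableSet_dyadicIncrementsLE hBmeas t (chainingLevel t m)) (by positivity)
    (by norm_num) (measure_compl_dyadicIncrementsLE_le hBmeas hBgauss ht)
    (A := 2 * t * (δ * (d * (1 + ‖x‖ + ‖z - x‖ + 24 * √t)))) (a := 16 * t * δ * d * √t)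
    fun m ω hω => ENNReal.ofReal_le_ofReal (exp_le_exp.2 ?_)
  have hB (s : ℝ) (hs : s ∈ Icc 0 t) : ‖B s ω‖ ≤ √t * (4 * m + 12) :=
    norm_le_of_mem_dyadicIncrementsLE hBcont hB0 ht hω hs
  have hWle (s : ℝ) (hs : s ∈ Icc 0 t) :
      ‖W s ω‖ ≤ ‖x‖ + ‖z - x‖ + 2 * (√t * (4 * m + 12)) := by
    rw [hW]
    linarith [norm_bridge_le hs x z (B s ω) (B t ω), hB s hs, hB t ⟨ht.le, le_rfl⟩]
  have hinf := neg_le_iInf_of_norm_le hδ hgrowth ht.le hWle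
  linarith [mul_le_mul_of_nonneg_left hinf (by positivity : (0 : ℝ) ≤ 2 * t)]

/-- Theorem 2 (finite variance of GPE-1, core estimate): let `d ≥ 1`, `t > 0`,
`x, z ∈ ℝ^d`, and let `B` be a standard `d`-dimensional Brownian motion
(continuous paths, `B 0 = 0`, independent increments with centered Gaussian law
of covariance `(v-u)·Id`). Define the Brownian bridge from `x` at time `0` to
`z` at time `t` by `W s = x + (s/t)(z - x) + B s - (s/t) B t`. If
`g : ℝ^d → ℝ` is continuous and `g(u) ≥ -δ ∑ᵢ (1 + |uᵢ|)` for some `δ ≥ 0`,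
then `E[exp(-2t · inf_{s ∈ [0,t]} g(W s))] < ∞`. -/
theorem gpe1_finite_variance_core
    {Ω : Type*} [MeasurableSpace Ω] (P : Measure Ω) [IsProbabilityMeasure P]
    (d : ℕ) (hd : 1 ≤ d) (t : ℝ) (ht : 0 < t) (x z : Fin d → ℝ)
    (B : ℝ → Ω → Fin d → ℝ)
    (hBmeas : ∀ s, Measurable (B s))
    (hBcont : ∀ ω, Continuous fun s => B s ω)
    (hB0 : ∀ ω, B 0 ω = 0)
    (hBindep : ∀ (n : ℕ) (τ : ℕ → ℝ), Monotone τ →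
      iIndepFun
        (fun k : Fin n => fun ω => B (τ (k + 1)) ω - B (τ k) ω) P)
    (hBgauss : ∀ u v : ℝ, u ≤ v →
      Measure.map (fun ω => B v ω - B u ω) P
        = Measure.pi fun _ : Fin d => gaussianReal 0 (v - u).toNNReal)
    (g : (Fin d → ℝ) → ℝ) (hg : Continuous g)
    (δ : ℝ) (hδ : 0 ≤ δ)
    (hgrowth : ∀ u : Fin d → ℝ, -(δ * ∑ i, (1 + |u i|)) ≤ g u)
    (W : ℝ → Ω → Fin d → ℝ)
    (hW : ∀ s ω, W s ω = x + (s / t) • (z - x) + B s ω - (s / t) • B t ω) :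
    ∫⁻ ω, ENNReal.ofReal
        (Real.exp (-2 * t * ⨅ s : Set.Icc (0 : ℝ) t, g (W s ω))) ∂P < ⊤ :=
  gpe1_finite_variance_core_general P d t ht x z B hBmeas hBcont hB0 hBgauss g δ hδ hgrowth W hW
end
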